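/- arXiv:2603.20398 — 5 statements merged into one kernel-verified Lean document; each statement's English description precedes it below -/
import Mathlib

section
/- Let (G, k, β) be a Büchi coverage game. Disruptor has a disrupting strategy in (G, k, β) if and only if Disruptor has a memoryless disrupting strategy in (G, k, β). -/
open scoped Classical

universe u

/-- A strategy: maps the strict history (the play so far, excluding the current
vertex) and the current vertex to a next vertex. -/
abbrev Strat (V : Type u) := List V → V → V

/-- A two-player game graph `G = (V₁, V₂, v₀, E)`. -/
structure GameGraph (V : Type u) where
  V1 : Set V
  V2 : Set V
  init : V
  E : V → V → Prop

namespace GameGraph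

variable {V : Type u}

/-- `V₁` and `V₂` are disjoint, together cover all vertices, and `E` is total. -/
def WellFormed (G : GameGraph V) : Prop :=
  Disjoint G.V1 G.V2 ∧ G.V1 ∪ G.V2 = Set.univ ∧ ∀ v, ∃ u, G.E v u

/-- `f` is a Player-1 strategy: at every history ending in a Player-1 vertex,
it chooses an `E`-successor. -/
def IsStrategy1 (G : GameGraph V) (f : Strat V) : Prop :=
  ∀ (h : List V) (v : V), v ∈ G.V1 → G.E v (f h v)

/-- `f` is a Player-2 strategy. -/
def IsStrategy2 (G : GameGraph V) (f : Strat V) : Prop :=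
  ∀ (h : List V) (v : V), v ∈ G.V2 → G.E v (f h v)

/-- The pair (strict history, current vertex) after `n` steps from `v`, when the
players move according to `f1` and `f2`. -/
noncomputable def run (G : GameGraph V) (f1 f2 : Strat V) (v : V) : ℕ → List V × V
  | 0 => ([], v)
  | n + 1 =>
      let p := run G f1 f2 v n
      (p.1 ++ [p.2], if p.2 ∈ G.V1 then f1 p.1 p.2 else f2 p.1 p.2)

/-- The play from `v` generated by `f1` and `f2`. -/
noncomputable def outcomeFrom (G : GameGraph V) (f1 f2 : Strat V) (v : V) (n : ℕ) : V :=
  (G.run f1 f2 v n).2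

/-- The play from the initial vertex generated by `f1` and `f2`. -/
noncomputable def outcome (G : GameGraph V) (f1 f2 : Strat V) : ℕ → V :=
  G.outcomeFrom f1 f2 G.init

/-- `Gᵛ`: the same game graph with initial vertex `v`. -/
def withInit (G : GameGraph V) (v : V) : GameGraph V := { G with init := v }

end GameGraph

variable {V : Type u}

/-- The set of vertices visited infinitely often along a play. -/
def infSet (ρ : ℕ → V) : Set V := { u | ∀ n, ∃ m, n ≤ m ∧ ρ m = u }

/-- The two objective types: Büchi and co-Büchi. -/
inductive ObjKind : Type
  | buchi
  | cobuchi

/-- Satisfaction of a `γ` objective `α` by a play `ρ`. -/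
def SatObj (γ : ObjKind) (ρ : ℕ → V) (α : Set V) : Prop :=
  match γ with
  | .buchi => (infSet ρ ∩ α).Nonempty
  | .cobuchi => infSet ρ ∩ α = ∅

/-- `F` is a covering strategy in the `γ`-coverage game `(G, k, β)`: against every
Player-2 strategy, every objective of `β` is satisfied by the play of some agent. -/
def IsCovering (G : GameGraph V) (γ : ObjKind) (k : ℕ) (β : Finset (Set V))
    (F : Fin k → Strat V) : Prop :=
  ∀ f2, G.IsStrategy2 f2 → ∀ α ∈ β, ∃ i, SatObj γ (G.outcome (F i) f2) α

/-- Coverer has a covering strategy in the `γ`-coverage game `(G, k, β)`. -/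
def CovererWins (G : GameGraph V) (γ : ObjKind) (k : ℕ) (β : Finset (Set V)) : Prop :=
  ∃ F : Fin k → Strat V, (∀ i, G.IsStrategy1 (F i)) ∧ IsCovering G γ k β F

/-- `f2` is a disrupting strategy in the `γ`-coverage game `(G, k, β)`: against every
Coverer strategy, some objective of `β` is satisfied by none of the agents' plays. -/
def IsDisrupting (G : GameGraph V) (γ : ObjKind) (k : ℕ) (β : Finset (Set V))
    (f2 : Strat V) : Prop :=
  ∀ F : Fin k → Strat V, (∀ i, G.IsStrategy1 (F i)) →
    ∃ α ∈ β, ∀ i, ¬ SatObj γ (G.outcome (F i) f2) α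

/-- Disruptor has a disrupting strategy in the `γ`-coverage game `(G, k, β)`. -/
def DisruptorWins (G : GameGraph V) (γ : ObjKind) (k : ℕ) (β : Finset (Set V)) : Prop :=
  ∃ f2, G.IsStrategy2 f2 ∧ IsDisrupting G γ k β f2

/-- A strategy is memoryless if its choice depends only on the current vertex. -/
def IsMemoryless (f : Strat V) : Prop := ∀ (h h' : List V) (v : V), f h v = f h' v

-- ============ auxiliary development ============
set_option linter.unusedSectionVars false
set_option linter.unusedVariables false
section Play

/-- A nonincreasing sequence of naturals is eventually constant. -/
lemma nat_anti_stab (a : ℕ → ℕ) (h : ∀ n, a (n + 1) ≤ a n) :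
    ∃ N, ∀ m, N ≤ m → a m = a N := by
  have hanti : ∀ m n, m ≤ n → a n ≤ a m := by
    intro m n hmn
    induction n with
    | zero => simp_all
    | succ n ih =>
      rcases Nat.eq_or_lt_of_le hmn with rfl | h'
      · exact le_rfl
      · exact le_trans (h n) (ih (Nat.lt_succ_iff.mp h'))
  have hne : (Set.range a).Nonempty := ⟨a 0, 0, rfl⟩
  obtain ⟨N, hN⟩ := Nat.sInf_mem hne
  refine ⟨N, fun m hm => ?_⟩
  have h1 : a m ≤ a N := hanti N m hm
  have h2 : sInf (Set.range a) ≤ a m := Nat.sInf_le ⟨m, rfl⟩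
  omega

/-- Pigeonhole: if `P` holds along the play unboundedly often, then some vertex
satisfying `P` is visited infinitely often. -/
lemma pigeonhole {V : Type u} [Fintype V] (ρ : ℕ → V) (P : V → Prop)
    (h : ∀ K, ∃ n, K ≤ n ∧ P (ρ n)) : ∃ u, P u ∧ u ∈ infSet ρ := by
  classical
  by_contra hc
  push_neg at hc
  have key : ∀ u, P u → ∃ K, ∀ m, K ≤ m → ρ m ≠ u := by
    intro u hu
    have := hc u hu
    rw [infSet, Set.mem_setOf_eq] at this
    push_neg at this
    obtain ⟨K, hK⟩ := this
    exact ⟨K, fun m hm heq => (hK m hm) heq⟩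
  set N : ℕ := Finset.univ.sup (fun u : V => if h : P u then (key u h).choose else 0) with hN
  obtain ⟨n, hn, hPn⟩ := h N
  have hch : (key (ρ n) hPn).choose ≤ N := by
    have he : (if h : P (ρ n) then (key (ρ n) h).choose else 0) = (key (ρ n) hPn).choose :=
      dif_pos hPn
    calc (key (ρ n) hPn).choose
        = (if h : P (ρ n) then (key (ρ n) h).choose else 0) := he.symm
      _ ≤ N := by
          rw [hN]
          exact Finset.le_sup (f := fun u : V => if h : P u then (key u h).choose else 0)
            (Finset.mem_univ (ρ n))
  exact (key (ρ n) hPn).choose_spec n (le_trans hch hn) rfl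

variable {V : Type u} (G : GameGraph V)

lemma run_hist_succ (f1 f2 : Strat V) (v : V) (n : ℕ) :
    (G.run f1 f2 v (n + 1)).1 = (G.run f1 f2 v n).1 ++ [(G.run f1 f2 v n).2] := rfl

lemma outcome_succ (f1 f2 : Strat V) (v : V) (n : ℕ) :
    G.outcomeFrom f1 f2 v (n + 1) =
      (if (G.run f1 f2 v n).2 ∈ G.V1 then f1 (G.run f1 f2 v n).1 (G.run f1 f2 v n).2
       else f2 (G.run f1 f2 v n).1 (G.run f1 f2 v n).2) := rfl

lemma outcome_run (f1 f2 : Strat V) (v : V) (n : ℕ) :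
    G.outcomeFrom f1 f2 v n = (G.run f1 f2 v n).2 := rfl

end Play

namespace Cov

variable {V : Type u} [Fintype V] (G : GameGraph V)

/-- Controlled predecessor for Player 2. -/
def cpre (Z : Set V) : Set V :=
  {v | (v ∈ G.V1 ∧ ∀ u, G.E v u → u ∈ Z) ∨ (v ∉ G.V1 ∧ ∃ u, G.E v u ∧ u ∈ Z)}

lemma cpre_mono {Z Z' : Set V} (h : Z ⊆ Z') : cpre G Z ⊆ cpre G Z' := by
  rintro v (⟨h1, h2⟩ | ⟨h1, u, hu1, hu2⟩)
  · exact Or.inl ⟨h1, fun u hu => h (h2 u hu)⟩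
  · exact Or.inr ⟨h1, u, hu1, h hu2⟩

lemma cpre_univ (htot : ∀ v, ∃ u, G.E v u) : cpre G Set.univ = Set.univ := by
  ext v; simp only [Set.mem_univ, iff_true, cpre, Set.mem_setOf_eq]
  by_cases h : v ∈ G.V1
  · exact Or.inl ⟨h, fun _ _ => trivial⟩
  · obtain ⟨u, hu⟩ := htot v; exact Or.inr ⟨h, u, hu, trivial⟩

/-- Safety iteration: P2 can keep the play inside `M` (or escape to `Z`). -/
def safeIter (M Z : Set V) : ℕ → Set V
  | 0 => Set.univ
  | n + 1 => M ∩ cpre G (safeIter M Z n ∪ Z)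

def safe (M Z : Set V) : Set V := ⋂ n, safeIter G M Z n

lemma safeIter_anti {M Z : Set V} : ∀ n, safeIter G M Z (n + 1) ⊆ safeIter G M Z n
  | 0 => by intro v _; trivial
  | n + 1 => by
      intro v hv
      exact ⟨hv.1, cpre_mono G (Set.union_subset_union_left Z (safeIter_anti n)) hv.2⟩

lemma safeIter_anti_le {M Z : Set V} {m n : ℕ} (h : m ≤ n) :
    safeIter G M Z n ⊆ safeIter G M Z m := by
  induction n with
  | zero => simp_all
  | succ n ih =>
    rcases Nat.eq_or_lt_of_le h with rfl | h'
    · exact fun _ h => h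
    · exact fun v hv => ih (Nat.lt_succ_iff.mp h') (safeIter_anti G n hv)

lemma safe_subset_iter {M Z : Set V} (n : ℕ) : safe G M Z ⊆ safeIter G M Z n :=
  Set.iInter_subset _ n

lemma safe_subset_M {M Z : Set V} : safe G M Z ⊆ M := by
  intro v hv
  exact (safe_subset_iter G 1 hv).1

lemma safeIter_mono_Z {M Z Z' : Set V} (h : Z ⊆ Z') :
    ∀ n, safeIter G M Z n ⊆ safeIter G M Z' n
  | 0 => fun _ h => h
  | n + 1 => fun v hv =>
      ⟨hv.1, cpre_mono G (Set.union_subset_union (safeIter_mono_Z h n) h) hv.2⟩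

lemma safe_mono_Z {M Z Z' : Set V} (h : Z ⊆ Z') : safe G M Z ⊆ safe G M Z' := by
  intro v hv
  exact Set.mem_iInter.mpr fun n => safeIter_mono_Z G h n (Set.mem_iInter.mp hv n)

/-- Key step property of the safe region. -/
lemma safe_cpre {M Z : Set V} : safe G M Z ⊆ cpre G (safe G M Z ∪ Z) := by
  intro v hv
  have hvn : ∀ n, v ∈ cpre G (safeIter G M Z n ∪ Z) := fun n =>
    (Set.mem_iInter.mp hv (n + 1)).2
  by_cases h1 : v ∈ G.V1
  · refine Or.inl ⟨h1, fun u hu => ?_⟩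
    by_cases hz : u ∈ Z
    · exact Or.inr hz
    · refine Or.inl (Set.mem_iInter.mpr fun n => ?_)
      rcases hvn n with ⟨_, hall⟩ | ⟨hn1, _⟩
      · rcases hall u hu with h | h
        · exact h
        · exact absurd h hz
      · exact absurd h1 hn1
  · refine Or.inr ⟨h1, ?_⟩
    by_contra hno
    push_neg at hno
    -- every successor fails at some stage
    have hfail : ∀ u, G.E v u → ∃ n, u ∉ safeIter G M Z n ∪ Z := by
      intro u hu
      by_contra hc
      push_neg at hc
      refine hno u hu ?_
      by_cases hz : u ∈ Z
      · exact Or.inr hz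
      · refine Or.inl (Set.mem_iInter.mpr fun n => ?_)
        rcases hc n with h | h
        · exact h
        · exact absurd h hz
    classical
    set N : ℕ := Finset.univ.sup (fun u : V => if h : ∃ n, u ∉ safeIter G M Z n ∪ Z then Nat.find h else 0) with hN
    rcases hvn N with ⟨hv1, _⟩ | ⟨_, u, hu, huN⟩
    · exact h1 hv1
    · have hx := hfail u hu
      have hfind : Nat.find hx ≤ N := by
        calc Nat.find hx
            = (if h : ∃ n, u ∉ safeIter G M Z n ∪ Z then Nat.find h else 0) := (dif_pos hx).symm
          _ ≤ N := by
              rw [hN]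
              exact Finset.le_sup (f := fun u : V =>
                if h : ∃ n, u ∉ safeIter G M Z n ∪ Z then Nat.find h else 0)
                (Finset.mem_univ u)
      have := Nat.find_spec hx
      rcases huN with h | h
      · exact this (Or.inl (safeIter_anti_le G hfind h))
      · exact this (Or.inr h)

/-- A generic uniformization lemma: finitely many successors. -/
lemma succ_uniform {A : ℕ → Set V} (hA : ∀ m n, m ≤ n → A m ⊆ A n) {v : V}
    (h : ∀ u, G.E v u → ∃ n, u ∈ A n) : ∃ N, ∀ u, G.E v u → u ∈ A N := by
  classical
  refine ⟨Finset.univ.sup (fun u : V => if h : ∃ n, u ∈ A n then Nat.find h else 0), ?_⟩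
  intro u hu
  have hx := h u hu
  have hfind : Nat.find hx ≤ Finset.univ.sup (fun u : V => if h : ∃ n, u ∈ A n then Nat.find h else 0) := by
    calc Nat.find hx
        = (if h : ∃ n, u ∈ A n then Nat.find h else 0) := (dif_pos hx).symm
      _ ≤ _ := Finset.le_sup (f := fun u : V => if h : ∃ n, u ∈ A n then Nat.find h else 0)
            (Finset.mem_univ u)
  exact hA _ _ hfind (Nat.find_spec hx)

section WithMs

variable (r : ℕ) (Ms : Fin r → Set V)

/-- Union of the safe regions. -/
def baseS (Z : Set V) : Set V := ⋃ i, safe G (Ms i) Z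

/-- P2 attractor iteration to the base. -/
def attrIter (Z : Set V) : ℕ → Set V
  | 0 => baseS G r Ms Z
  | n + 1 => attrIter Z n ∪ cpre G (attrIter Z n)

def FF (Z : Set V) : Set V := ⋃ n, attrIter G r Ms Z n

lemma attrIter_mono_n {Z : Set V} : ∀ m n, m ≤ n → attrIter G r Ms Z m ⊆ attrIter G r Ms Z n := by
  intro m n h
  induction n with
  | zero => simp_all
  | succ n ih =>
    rcases Nat.eq_or_lt_of_le h with rfl | h'
    · exact fun _ h => h
    · exact fun v hv => Or.inl (ih (Nat.lt_succ_iff.mp h') hv)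

lemma attrIter_sub_FF {Z : Set V} (n : ℕ) : attrIter G r Ms Z n ⊆ FF G r Ms Z :=
  Set.subset_iUnion _ n

lemma baseS_sub_FF {Z : Set V} : baseS G r Ms Z ⊆ FF G r Ms Z := attrIter_sub_FF G r Ms 0

lemma cpre_FF {Z : Set V} : cpre G (FF G r Ms Z) ⊆ FF G r Ms Z := by
  intro v hv
  rcases hv with ⟨h1, hall⟩ | ⟨h1, u, hu, huF⟩
  · obtain ⟨N, hN⟩ := succ_uniform G (attrIter_mono_n G r Ms) (fun u hu => Set.mem_iUnion.mp (hall u hu))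
    exact attrIter_sub_FF G r Ms (N + 1) (Or.inr (Or.inl ⟨h1, hN⟩))
  · obtain ⟨n, hn⟩ := Set.mem_iUnion.mp huF
    exact attrIter_sub_FF G r Ms (n + 1) (Or.inr (Or.inr ⟨h1, u, hu, hn⟩))

lemma baseS_mono {Z Z' : Set V} (h : Z ⊆ Z') : baseS G r Ms Z ⊆ baseS G r Ms Z' := by
  intro v hv
  obtain ⟨i, hi⟩ := Set.mem_iUnion.mp hv
  exact Set.mem_iUnion.mpr ⟨i, safe_mono_Z G h hi⟩

lemma attrIter_mono_Z {Z Z' : Set V} (h : Z ⊆ Z') :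
    ∀ n, attrIter G r Ms Z n ⊆ attrIter G r Ms Z' n
  | 0 => baseS_mono G r Ms h
  | n + 1 => Set.union_subset_union (attrIter_mono_Z h n) (cpre_mono G (attrIter_mono_Z h n))

lemma FF_mono {Z Z' : Set V} (h : Z ⊆ Z') : FF G r Ms Z ⊆ FF G r Ms Z' := by
  intro v hv
  obtain ⟨n, hn⟩ := Set.mem_iUnion.mp hv
  exact attrIter_sub_FF G r Ms n (attrIter_mono_Z G r Ms h n hn)

/-- The iteration computing the least fixpoint of `FF`. -/
def Wseq : ℕ → Set V
  | 0 => ∅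
  | n + 1 => FF G r Ms (Wseq n)

lemma Wseq_mono : ∀ m n, m ≤ n → Wseq G r Ms m ⊆ Wseq G r Ms n := by
  have key : ∀ n, Wseq G r Ms n ⊆ Wseq G r Ms (n + 1) := by
    intro n
    induction n with
    | zero => simp [Wseq]
    | succ n ih => exact FF_mono G r Ms ih
  intro m n h
  induction n with
  | zero => simp_all
  | succ n ih =>
    rcases Nat.eq_or_lt_of_le h with rfl | h'
    · exact fun _ h => h
    · exact fun v hv => key n (ih (Nat.lt_succ_iff.mp h') hv)

lemma Wseq_stab : ∃ N, Wseq G r Ms (N + 1) = Wseq G r Ms N := by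
  by_contra h
  push_neg at h
  have hstrict : ∀ n, Set.ncard (Wseq G r Ms n) < Set.ncard (Wseq G r Ms (n + 1)) := by
    intro n
    refine Set.ncard_lt_ncard ?_ (Set.toFinite _)
    exact lt_of_le_of_ne (Wseq_mono G r Ms n (n + 1) (Nat.le_succ n)) (Ne.symm (h n))
  have hge : ∀ n, n ≤ Set.ncard (Wseq G r Ms n) := by
    intro n
    induction n with
    | zero => exact Nat.zero_le _
    | succ n ih => exact Nat.lt_of_le_of_lt ih (hstrict n)
  have := hge (Fintype.card V + 1)
  have hle : Set.ncard (Wseq G r Ms (Fintype.card V + 1)) ≤ Fintype.card V := by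
    have := Set.ncard_le_ncard (Set.subset_univ (Wseq G r Ms (Fintype.card V + 1)))
      (Set.toFinite (Set.univ : Set V))
    rwa [Set.ncard_univ, Nat.card_eq_fintype_card] at this
  omega

/-- The stabilization point. -/
noncomputable def NN : ℕ := (Wseq_stab G r Ms).choose

/-- The fixpoint: Disruptor's winning region. -/
noncomputable def WW : Set V := Wseq G r Ms (NN G r Ms)

lemma WW_fix : FF G r Ms (WW G r Ms) = WW G r Ms := (Wseq_stab G r Ms).choose_spec

lemma Wseq_sub_WW {n : ℕ} (h : n ≤ NN G r Ms) : Wseq G r Ms n ⊆ WW G r Ms :=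
  Wseq_mono G r Ms n _ h

lemma safe_sub_WW (i : Fin r) : safe G (Ms i) (WW G r Ms) ⊆ WW G r Ms := by
  intro v hv
  have : v ∈ baseS G r Ms (WW G r Ms) := Set.mem_iUnion.mpr ⟨i, hv⟩
  have := baseS_sub_FF G r Ms this
  rwa [WW_fix] at this

lemma cpre_WW : cpre G (WW G r Ms) ⊆ WW G r Ms := by
  intro v hv
  have : v ∈ cpre G (FF G r Ms (WW G r Ms)) := by rwa [WW_fix]
  have := cpre_FF G r Ms this
  rwa [WW_fix] at this

section PartA

variable (hr : 0 < r) (htot : ∀ v, ∃ u, G.E v u)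

noncomputable def stg (v : V) : ℕ :=
  if h : ∃ n, v ∈ Wseq G r Ms n then Nat.find h else 0

noncomputable def Zs (v : V) : Set V := Wseq G r Ms (stg G r Ms v - 1)

noncomputable def ar (v : V) : ℕ :=
  if h : ∃ a, v ∈ attrIter G r Ms (Zs G r Ms v) a then Nat.find h else 0

noncomputable def jdx (v : V) : ℕ :=
  if h : ∃ j : ℕ, ∃ i : Fin r, (i : ℕ) = j ∧ v ∈ safe G (Ms i) (Zs G r Ms v) then Nat.find h
  else 0

noncomputable def iOf (v : V) : Fin r :=
  if h : ∃ i : Fin r, (i : ℕ) = jdx G r Ms v ∧ v ∈ safe G (Ms i) (Zs G r Ms v) then h.choose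
  else ⟨0, hr⟩

noncomputable def target (v : V) : Set V :=
  if v ∈ WW G r Ms then
    (if ar G r Ms v = 0 then safe G (Ms (iOf G r Ms hr v)) (Zs G r Ms v) ∪ Zs G r Ms v
     else attrIter G r Ms (Zs G r Ms v) (ar G r Ms v - 1))
  else Set.univ

noncomputable def anySucc (v : V) : V := (htot v).choose

lemma anySucc_E (v : V) : G.E v (anySucc G htot v) := (htot v).choose_spec

noncomputable def gmem (v : V) : V :=
  if h : ∃ u, G.E v u ∧ u ∈ target G r Ms hr v then h.choose else anySucc G htot v

-- basic facts about stg
lemma stg_le {v : V} {n : ℕ} (h : v ∈ Wseq G r Ms n) : stg G r Ms v ≤ n := by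
  have hx : ∃ n, v ∈ Wseq G r Ms n := ⟨n, h⟩
  rw [stg, dif_pos hx]
  exact Nat.find_le h

lemma stg_mem {v : V} (hv : v ∈ WW G r Ms) : v ∈ Wseq G r Ms (stg G r Ms v) := by
  have hx : ∃ n, v ∈ Wseq G r Ms n := ⟨NN G r Ms, hv⟩
  rw [stg, dif_pos hx]
  exact Nat.find_spec hx

lemma stg_pos {v : V} (hv : v ∈ WW G r Ms) : 1 ≤ stg G r Ms v := by
  by_contra h
  push_neg at h
  interval_cases h' : stg G r Ms v
  · have := stg_mem G r Ms hv
    rw [h'] at this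
    exact absurd this (by simp [Wseq])

lemma stg_le_NN {v : V} (hv : v ∈ WW G r Ms) : stg G r Ms v ≤ NN G r Ms := stg_le G r Ms hv

lemma Wseq_stg_eq {v : V} (hv : v ∈ WW G r Ms) :
    Wseq G r Ms (stg G r Ms v) = FF G r Ms (Zs G r Ms v) := by
  obtain ⟨m, hm⟩ := Nat.exists_eq_add_of_le (stg_pos G r Ms hv)
  rw [Zs, hm]
  simp [Wseq, Nat.add_comm]

lemma ar_mem {v : V} (hv : v ∈ WW G r Ms) :
    v ∈ attrIter G r Ms (Zs G r Ms v) (ar G r Ms v) := by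
  have h0 : v ∈ FF G r Ms (Zs G r Ms v) := by
    rw [← Wseq_stg_eq G r Ms hv]; exact stg_mem G r Ms hv
  have hx : ∃ a, v ∈ attrIter G r Ms (Zs G r Ms v) a := Set.mem_iUnion.mp h0
  rw [ar, dif_pos hx]
  exact Nat.find_spec hx

lemma ar_le {v : V} {a : ℕ} (h : v ∈ attrIter G r Ms (Zs G r Ms v) a) : ar G r Ms v ≤ a := by
  have hx : ∃ a, v ∈ attrIter G r Ms (Zs G r Ms v) a := ⟨a, h⟩
  rw [ar, dif_pos hx]
  exact Nat.find_le h

lemma ar_not_mem {v : V} (hv : v ∈ WW G r Ms) (h : ar G r Ms v ≠ 0) :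
    v ∉ attrIter G r Ms (Zs G r Ms v) (ar G r Ms v - 1) := by
  intro hmem
  have := ar_le G r Ms hmem
  omega

lemma iOf_spec {v : V} (hv : v ∈ WW G r Ms) (har : ar G r Ms v = 0) :
    ((iOf G r Ms hr v : ℕ) = jdx G r Ms v ∧
      v ∈ safe G (Ms (iOf G r Ms hr v)) (Zs G r Ms v)) := by
  have hbase : v ∈ baseS G r Ms (Zs G r Ms v) := by
    have := ar_mem G r Ms hv
    rwa [har] at this
  obtain ⟨i, hi⟩ := Set.mem_iUnion.mp hbase
  have hj : ∃ j : ℕ, ∃ i : Fin r, (i : ℕ) = j ∧ v ∈ safe G (Ms i) (Zs G r Ms v) :=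
    ⟨(i : ℕ), i, rfl, hi⟩
  have hspec := Nat.find_spec hj
  have hjdx : jdx G r Ms v = Nat.find hj := by rw [jdx, dif_pos hj]
  obtain ⟨i', hi'1, hi'2⟩ := hspec
  have hx : ∃ i : Fin r, (i : ℕ) = jdx G r Ms v ∧ v ∈ safe G (Ms i) (Zs G r Ms v) :=
    ⟨i', by rw [hjdx]; exact hi'1, hi'2⟩
  rw [iOf, dif_pos hx]
  exact hx.choose_spec

lemma jdx_le {v : V} (i : Fin r) (h : v ∈ safe G (Ms i) (Zs G r Ms v)) :
    jdx G r Ms v ≤ (i : ℕ) := by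
  have hj : ∃ j : ℕ, ∃ i : Fin r, (i : ℕ) = j ∧ v ∈ safe G (Ms i) (Zs G r Ms v) :=
    ⟨(i : ℕ), i, rfl, h⟩
  rw [jdx, dif_pos hj]
  exact Nat.find_le ⟨i, rfl, h⟩

/-- Any Player-1 move from `v ∈ WW` lands in `target v`. -/
lemma target_of_V1 {v u : V} (hv : v ∈ WW G r Ms) (h1 : v ∈ G.V1) (hE : G.E v u) :
    u ∈ target G r Ms hr v := by
  rw [target, if_pos hv]
  by_cases har : ar G r Ms v = 0
  · rw [if_pos har]
    have hsafe := (iOf_spec G r Ms hr hv har).2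
    rcases safe_cpre G hsafe with ⟨_, hall⟩ | ⟨hn1, _⟩
    · exact hall u hE
    · exact absurd h1 hn1
  · rw [if_neg har]
    have hmem := ar_mem G r Ms hv
    have hne := ar_not_mem G r Ms hv har
    obtain ⟨a', ha'⟩ := Nat.exists_eq_add_of_le (Nat.one_le_iff_ne_zero.mpr har)
    rw [ha'] at hmem
    have : v ∈ attrIter G r Ms (Zs G r Ms v) a' ∪ cpre G (attrIter G r Ms (Zs G r Ms v) a') := by
      simpa [attrIter, Nat.add_comm] using hmem
    rcases this with h | h
    · exact absurd (by simpa [ha'] using h : v ∈ attrIter G r Ms (Zs G r Ms v) (ar G r Ms v - 1)) hne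
    · rcases h with ⟨_, hall⟩ | ⟨hn1, _⟩
      · have := hall u hE
        simpa [ha'] using this
      · exact absurd h1 hn1

/-- At a Player-2 vertex of `WW`, some successor lies in `target v`, and `gmem` picks one. -/
lemma gmem_target {v : V} (hv : v ∈ WW G r Ms) (h1 : v ∉ G.V1) :
    G.E v (gmem G r Ms hr htot v) ∧ gmem G r Ms hr htot v ∈ target G r Ms hr v := by
  have hex : ∃ u, G.E v u ∧ u ∈ target G r Ms hr v := by
    by_cases har : ar G r Ms v = 0
    · have hsafe := (iOf_spec G r Ms hr hv har).2
      rcases safe_cpre G hsafe with ⟨hv1, _⟩ | ⟨_, u, hu, humem⟩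
      · exact absurd hv1 h1
      · exact ⟨u, hu, by rw [target, if_pos hv, if_pos har]; exact humem⟩
    · have hmem := ar_mem G r Ms hv
      have hne := ar_not_mem G r Ms hv har
      obtain ⟨a', ha'⟩ := Nat.exists_eq_add_of_le (Nat.one_le_iff_ne_zero.mpr har)
      rw [ha'] at hmem
      have : v ∈ attrIter G r Ms (Zs G r Ms v) a' ∪ cpre G (attrIter G r Ms (Zs G r Ms v) a') := by
        simpa [attrIter, Nat.add_comm] using hmem
      rcases this with h | h
      · exact absurd (by simpa [ha'] using h : v ∈ attrIter G r Ms (Zs G r Ms v) (ar G r Ms v - 1)) hne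
      · rcases h with ⟨hv1, _⟩ | ⟨_, u, hu, humem⟩
        · exact absurd hv1 h1
        · refine ⟨u, hu, ?_⟩
          rw [target, if_pos hv, if_neg har]
          simpa [ha'] using humem
  rw [gmem, dif_pos hex]
  exact hex.choose_spec

lemma gmem_E (v : V) : G.E v (gmem G r Ms hr htot v) := by
  rw [gmem]
  split
  · next h => exact h.choose_spec.1
  · exact anySucc_E G htot v

/-- The crucial rank-decrease property. -/
lemma step_rank {v u : V} (hv : v ∈ WW G r Ms) (hu : u ∈ target G r Ms hr v) :
    u ∈ WW G r Ms ∧ stg G r Ms u ≤ stg G r Ms v ∧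
      (ar G r Ms v ≠ 0 →
        (stg G r Ms u < stg G r Ms v ∨
          (stg G r Ms u = stg G r Ms v ∧ ar G r Ms u < ar G r Ms v))) ∧
      (ar G r Ms v = 0 →
        (stg G r Ms u < stg G r Ms v ∨
          (stg G r Ms u = stg G r Ms v ∧ ar G r Ms u = 0 ∧ jdx G r Ms u ≤ jdx G r Ms v))) := by
  rw [target, if_pos hv] at hu
  have hstgv1 := stg_pos G r Ms hv
  have hstgvNN := stg_le_NN G r Ms hv
  by_cases har : ar G r Ms v = 0
  · rw [if_pos har] at hu
    rcases hu with hu | hu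
    · -- u ∈ safe (Ms (iOf v)) (Zs v)
      have hbase : u ∈ baseS G r Ms (Zs G r Ms v) := Set.mem_iUnion.mpr ⟨_, hu⟩
      have hWsq : u ∈ Wseq G r Ms (stg G r Ms v) := by
        rw [Wseq_stg_eq G r Ms hv]
        exact baseS_sub_FF G r Ms hbase
      have hle : stg G r Ms u ≤ stg G r Ms v := stg_le G r Ms hWsq
      have huWW : u ∈ WW G r Ms := Wseq_sub_WW G r Ms hstgvNN hWsq
      refine ⟨huWW, hle, fun h => absurd har h, fun _ => ?_⟩
      rcases Nat.lt_or_ge (stg G r Ms u) (stg G r Ms v) with h | h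
      · exact Or.inl h
      · have heq : stg G r Ms u = stg G r Ms v := le_antisymm hle h
        have hZeq : Zs G r Ms u = Zs G r Ms v := by rw [Zs, Zs, heq]
        have har0 : ar G r Ms u = 0 := by
          have : u ∈ attrIter G r Ms (Zs G r Ms u) 0 := by rw [hZeq]; exact hbase
          exact Nat.le_zero.mp (ar_le G r Ms this)
        have hjd : jdx G r Ms u ≤ jdx G r Ms v := by
          have hiv := (iOf_spec G r Ms hr hv har).1
          have : u ∈ safe G (Ms (iOf G r Ms hr v)) (Zs G r Ms u) := by rw [hZeq]; exact hu
          have := jdx_le G r Ms (iOf G r Ms hr v) this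
          omega
        exact Or.inr ⟨heq, har0, hjd⟩
    · -- u ∈ Zs v
      have hle' : stg G r Ms u ≤ stg G r Ms v - 1 := stg_le G r Ms hu
      have hlt : stg G r Ms u < stg G r Ms v := by omega
      have huWW : u ∈ WW G r Ms := Wseq_sub_WW G r Ms (by omega) hu
      exact ⟨huWW, le_of_lt hlt, fun _ => Or.inl hlt, fun _ => Or.inl hlt⟩
  · rw [if_neg har] at hu
    have hWsq : u ∈ Wseq G r Ms (stg G r Ms v) := by
      rw [Wseq_stg_eq G r Ms hv]
      exact attrIter_sub_FF G r Ms _ hu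
    have hle : stg G r Ms u ≤ stg G r Ms v := stg_le G r Ms hWsq
    have huWW : u ∈ WW G r Ms := Wseq_sub_WW G r Ms hstgvNN hWsq
    refine ⟨huWW, hle, fun _ => ?_, fun h => absurd h har⟩
    rcases Nat.lt_or_ge (stg G r Ms u) (stg G r Ms v) with h | h
    · exact Or.inl h
    · have heq : stg G r Ms u = stg G r Ms v := le_antisymm hle h
      have hZeq : Zs G r Ms u = Zs G r Ms v := by rw [Zs, Zs, heq]
      have : u ∈ attrIter G r Ms (Zs G r Ms u) (ar G r Ms v - 1) := by rw [hZeq]; exact hu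
      have := ar_le G r Ms this
      exact Or.inr ⟨heq, by omega⟩

/-- Part A: if the initial vertex is in `WW`, the memoryless strategy `gmem` traps
every play inside some `Ms i` eventually. -/
lemma partA (hinit : G.init ∈ WW G r Ms) (f1 : Strat V) (hf1 : G.IsStrategy1 f1) :
    ∃ i : Fin r, infSet (G.outcome f1 (fun _ v => gmem G r Ms hr htot v)) ⊆ Ms i := by
  set g2 : Strat V := fun _ v => gmem G r Ms hr htot v with hg2
  set ρ : ℕ → V := G.outcome f1 g2 with hρ
  have hρ0 : ρ 0 = G.init := rfl
  have hstep : ∀ n, ρ n ∈ WW G r Ms → ρ (n + 1) ∈ target G r Ms hr (ρ n) := by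
    intro n hn
    have hrun : ρ n = (G.run f1 g2 G.init n).2 := rfl
    have hsucc := outcome_succ G f1 g2 G.init n
    by_cases h1 : (G.run f1 g2 G.init n).2 ∈ G.V1
    · rw [if_pos h1] at hsucc
      have hE : G.E (ρ n) (f1 (G.run f1 g2 G.init n).1 (ρ n)) := by
        rw [hrun]; exact hf1 _ _ h1
      have := target_of_V1 G r Ms hr hn (by rw [hrun]; exact h1) hE
      rw [hρ]
      show G.outcomeFrom f1 g2 G.init (n+1) ∈ _
      rw [hsucc, ← hrun]
      exact this
    · rw [if_neg h1] at hsucc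
      have := (gmem_target G r Ms hr htot hn (by rw [hrun]; exact h1)).2
      rw [hρ]
      show G.outcomeFrom f1 g2 G.init (n+1) ∈ _
      rw [hsucc, ← hrun]
      exact this
  have hWWp : ∀ n, ρ n ∈ WW G r Ms := by
    intro n
    induction n with
    | zero => rw [hρ0]; exact hinit
    | succ n ih => exact (step_rank G r Ms hr ih (hstep n ih)).1
  -- stage stabilizes
  obtain ⟨n1, hn1⟩ := nat_anti_stab (fun n => stg G r Ms (ρ n))
    (fun n => (step_rank G r Ms hr (hWWp n) (hstep n (hWWp n))).2.1)
  have hstg_eq : ∀ m, n1 ≤ m → stg G r Ms (ρ m) = stg G r Ms (ρ n1) := hn1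
  -- attractor rank stabilizes (after n1)
  have har_dec : ∀ m, n1 ≤ m → ar G r Ms (ρ (m + 1)) ≤ ar G r Ms (ρ m) := by
    intro m hm
    obtain ⟨_, _, hA, hB⟩ := step_rank G r Ms hr (hWWp m) (hstep m (hWWp m))
    have he : stg G r Ms (ρ (m + 1)) = stg G r Ms (ρ m) := by
      rw [hstg_eq m hm, hstg_eq (m + 1) (by omega)]
    by_cases har : ar G r Ms (ρ m) = 0
    · rcases hB har with h | ⟨_, h0, _⟩
      · omega
      · omega
    · rcases hA har with h | ⟨_, h⟩
      · omega
      · omega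
  obtain ⟨n2', hn2'⟩ := nat_anti_stab (fun k => ar G r Ms (ρ (n1 + k)))
    (fun k => by
      have := har_dec (n1 + k) (by omega)
      simpa [Nat.add_assoc] using this)
  set n2 : ℕ := n1 + n2' with hn2def
  have har_eq : ∀ m, n2 ≤ m → ar G r Ms (ρ m) = ar G r Ms (ρ n2) := by
    intro m hm
    have h1 := hn2' (m - n1) (by omega)
    have h2 : n1 + (m - n1) = m := by omega
    rw [h2] at h1
    exact h1
  have har0 : ar G r Ms (ρ n2) = 0 := by
    by_contra hc
    obtain ⟨_, _, hA, _⟩ := step_rank G r Ms hr (hWWp n2) (hstep n2 (hWWp n2))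
    have he : stg G r Ms (ρ (n2 + 1)) = stg G r Ms (ρ n2) := by
      rw [hstg_eq n2 (by omega), hstg_eq (n2 + 1) (by omega)]
    have he2 : ar G r Ms (ρ (n2 + 1)) = ar G r Ms (ρ n2) := har_eq (n2 + 1) (by omega)
    rcases hA hc with h | ⟨_, h⟩
    · omega
    · omega
  -- jdx stabilizes (after n2)
  have hjd_dec : ∀ m, n2 ≤ m → jdx G r Ms (ρ (m + 1)) ≤ jdx G r Ms (ρ m) := by
    intro m hm
    obtain ⟨_, _, _, hB⟩ := step_rank G r Ms hr (hWWp m) (hstep m (hWWp m))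
    have he : stg G r Ms (ρ (m + 1)) = stg G r Ms (ρ m) := by
      rw [hstg_eq m (by omega), hstg_eq (m + 1) (by omega)]
    have harm : ar G r Ms (ρ m) = 0 := by rw [har_eq m hm]; exact har0
    rcases hB harm with h | ⟨_, _, h⟩
    · omega
    · exact h
  obtain ⟨n3', hn3'⟩ := nat_anti_stab (fun k => jdx G r Ms (ρ (n2 + k)))
    (fun k => by
      have := hjd_dec (n2 + k) (by omega)
      simpa [Nat.add_assoc] using this)
  set n3 : ℕ := n2 + n3' with hn3def
  have hjd_eq : ∀ m, n3 ≤ m → jdx G r Ms (ρ m) = jdx G r Ms (ρ n3) := by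
    intro m hm
    have h1 := hn3' (m - n2) (by omega)
    have h2 : n2 + (m - n2) = m := by omega
    rw [h2] at h1
    exact h1
  refine ⟨iOf G r Ms hr (ρ n3), ?_⟩
  have htail : ∀ m, n3 ≤ m → ρ m ∈ Ms (iOf G r Ms hr (ρ n3)) := by
    intro m hm
    have harm : ar G r Ms (ρ m) = 0 := by rw [har_eq m (by omega)]; exact har0
    obtain ⟨hval, hsafe⟩ := iOf_spec G r Ms hr (hWWp m) harm
    have harn3 : ar G r Ms (ρ n3) = 0 := by rw [har_eq n3 (by omega)]; exact har0
    obtain ⟨hval3, _⟩ := iOf_spec G r Ms hr (hWWp n3) harn3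
    have hieq : iOf G r Ms hr (ρ m) = iOf G r Ms hr (ρ n3) := by
      have : (iOf G r Ms hr (ρ m) : ℕ) = (iOf G r Ms hr (ρ n3) : ℕ) := by
        rw [hval, hval3, hjd_eq m hm]
      exact Fin.ext this
    rw [← hieq]
    exact safe_subset_M G hsafe
  intro u hu
  obtain ⟨m, hm, heq⟩ := hu n3
  rw [← heq]
  exact htail m hm


-- ====================== Part B ======================

noncomputable def Mt (t : ℕ) : Set V := Ms ⟨t % r, Nat.mod_lt t hr⟩

noncomputable def adv (t : ℕ) (v : V) : ℕ := if v ∈ Mt r Ms hr t then t else t + 1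

noncomputable def stOf (p : List V) : ℕ := p.foldl (adv r Ms hr) 0

noncomputable def esc (M : Set V) (v : V) : ℕ :=
  if h : ∃ n, v ∉ safeIter G M (WW G r Ms) n then Nat.find h else 0

lemma esc_ex {t : ℕ} {v : V} (hv : v ∉ WW G r Ms) :
    ∃ n, v ∉ safeIter G (Mt r Ms hr t) (WW G r Ms) n := by
  by_contra h
  push_neg at h
  exact hv (safe_sub_WW G r Ms _ (Set.mem_iInter.mpr h))

lemma esc_le {t : ℕ} {v : V} {n : ℕ} (h : v ∉ safeIter G (Mt r Ms hr t) (WW G r Ms) n) :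
    esc G r Ms (Mt r Ms hr t) v ≤ n := by
  have hx : ∃ n, v ∉ safeIter G (Mt r Ms hr t) (WW G r Ms) n := ⟨n, h⟩
  rw [esc, dif_pos hx]
  exact Nat.find_le h

lemma esc_spec {t : ℕ} {v : V} (hv : v ∉ WW G r Ms) :
    v ∉ safeIter G (Mt r Ms hr t) (WW G r Ms) (esc G r Ms (Mt r Ms hr t) v) := by
  have hx := esc_ex G r Ms hr (t := t) (v := v) hv
  rw [esc, dif_pos hx]
  exact Nat.find_spec hx

include htot in
lemma esc_ge2 {t : ℕ} {v : V} (hv : v ∉ WW G r Ms) (hM : v ∈ Mt r Ms hr t) :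
    2 ≤ esc G r Ms (Mt r Ms hr t) v := by
  have hx := esc_ex G r Ms hr (t := t) (v := v) hv
  rw [esc, dif_pos hx]
  by_contra h
  push_neg at h
  have hspec := Nat.find_spec hx
  interval_cases hfind : Nat.find hx
  · exact hspec (by trivial)
  · refine hspec ⟨hM, ?_⟩
    show v ∈ cpre G (safeIter G (Mt r Ms hr t) (WW G r Ms) 0 ∪ WW G r Ms)
    have h0 : safeIter G (Mt r Ms hr t) (WW G r Ms) 0 ∪ WW G r Ms = Set.univ := by
      simp [safeIter]
    rw [h0, cpre_univ G htot]
    trivial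

/-- Player 2 cannot move from outside `WW` into `WW`. -/
lemma stayout_V2 {v u : V} (hv : v ∉ WW G r Ms) (h1 : v ∉ G.V1) (hE : G.E v u) :
    u ∉ WW G r Ms := by
  intro hu
  exact hv (cpre_WW G r Ms (Or.inr ⟨h1, u, hE, hu⟩))

include htot in
/-- Player 1 has a move staying outside `WW`. -/
lemma stayout_V1 {v : V} (hv : v ∉ WW G r Ms) :
    ∃ u, G.E v u ∧ u ∉ WW G r Ms := by
  by_contra h
  push_neg at h
  by_cases h1 : v ∈ G.V1
  · exact hv (cpre_WW G r Ms (Or.inl ⟨h1, fun u hu => h u hu⟩))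
  · obtain ⟨u, hu⟩ := htot v
    exact hv (cpre_WW G r Ms (Or.inr ⟨h1, u, hu, h u hu⟩))

include htot in
/-- Player 1 has an escaping move at a V1 vertex inside the current target. -/
lemma escape_V1 {v : V} {t : ℕ} (hv : v ∉ WW G r Ms) (h1 : v ∈ G.V1)
    (hM : v ∈ Mt r Ms hr t) :
    ∃ u, G.E v u ∧
      u ∉ safeIter G (Mt r Ms hr t) (WW G r Ms) (esc G r Ms (Mt r Ms hr t) v - 1) ∧
      u ∉ WW G r Ms := by
  have hnot := esc_spec G r Ms hr (t := t) (v := v) hv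
  have hge := esc_ge2 G r Ms hr htot hv hM
  obtain ⟨m, hm⟩ : ∃ m, esc G r Ms (Mt r Ms hr t) v = m + 1 := ⟨esc G r Ms (Mt r Ms hr t) v - 1, by omega⟩
  rw [hm] at hnot
  have hnotc : v ∉ cpre G (safeIter G (Mt r Ms hr t) (WW G r Ms) m ∪ WW G r Ms) := by
    intro hc
    exact hnot ⟨hM, hc⟩
  rw [cpre] at hnotc
  simp only [Set.mem_setOf_eq, not_or, not_and, not_exists] at hnotc
  obtain ⟨hA, _⟩ := hnotc
  have := hA h1
  push_neg at this
  obtain ⟨u, hu, hnotin⟩ := this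
  have hm' : m = esc G r Ms (Mt r Ms hr t) v - 1 := by omega
  rw [hm'] at hnotin
  exact ⟨u, hu, fun h => hnotin (Or.inl h), fun h => hnotin (Or.inr h)⟩

noncomputable def bmove (v : V) (t : ℕ) : V :=
  if h : ∃ u, G.E v u ∧
      u ∉ safeIter G (Mt r Ms hr t) (WW G r Ms) (esc G r Ms (Mt r Ms hr t) v - 1) ∧
      u ∉ WW G r Ms then h.choose
  else if h : ∃ u, G.E v u ∧ u ∉ WW G r Ms then h.choose
  else anySucc G htot v

lemma bmove_E (v : V) (t : ℕ) : G.E v (bmove G r Ms hr htot v t) := by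
  rw [bmove]
  split
  · next h => exact h.choose_spec.1
  · split
    · next h => exact h.choose_spec.1
    · exact anySucc_E G htot v

lemma bmove_notWW {v : V} (t : ℕ) (hv : v ∉ WW G r Ms) :
    bmove G r Ms hr htot v t ∉ WW G r Ms := by
  rw [bmove]
  split
  · next h => exact h.choose_spec.2.2
  · rw [dif_pos (stayout_V1 G r Ms htot hv)]
    exact (stayout_V1 G r Ms htot hv).choose_spec.2

lemma bmove_escape {v : V} {t : ℕ} (hv : v ∉ WW G r Ms) (h1 : v ∈ G.V1)
    (hM : v ∈ Mt r Ms hr t) :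
    bmove G r Ms hr htot v t ∉
      safeIter G (Mt r Ms hr t) (WW G r Ms) (esc G r Ms (Mt r Ms hr t) v - 1) := by
  rw [bmove, dif_pos (escape_V1 G r Ms hr htot hv h1 hM)]
  exact (escape_V1 G r Ms hr htot hv h1 hM).choose_spec.2.1

noncomputable def f1B (h : List V) (v : V) : V :=
  if hc : v ∉ WW G r Ms ∧ v ∈ G.V1 then bmove G r Ms hr htot v (stOf r Ms hr (h ++ [v]))
  else anySucc G htot v

lemma f1B_strategy1 : G.IsStrategy1 (f1B G r Ms hr htot) := by
  intro h v hv
  rw [f1B]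
  split
  · exact bmove_E G r Ms hr htot v _
  · exact anySucc_E G htot v

include hr htot in
/-- Part B: if the initial vertex is outside `WW`, then against ANY Player-2 strategy,
Player 1 can force the play to leave every `Ms i` infinitely often. -/
lemma partB (hG2 : ∀ v, v ∉ G.V1 → v ∈ G.V2) (hinit : G.init ∉ WW G r Ms)
    (f2 : Strat V) (hf2 : G.IsStrategy2 f2) :
    ∃ f1, G.IsStrategy1 f1 ∧ ∀ i : Fin r, ¬ (infSet (G.outcome f1 f2) ⊆ Ms i) := by
  classical
  refine ⟨f1B G r Ms hr htot, f1B_strategy1 G r Ms hr htot, ?_⟩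
  set f1 : Strat V := f1B G r Ms hr htot with hf1def
  let ρ : ℕ → V := G.outcome f1 f2
  let hist : ℕ → List V := fun n => (G.run f1 f2 G.init n).1
  let T : ℕ → ℕ := fun n => stOf r Ms hr (hist (n + 1))
  have hρ0 : ρ 0 = G.init := rfl
  have hhist : ∀ n, hist (n + 1) = hist n ++ [ρ n] := fun n => rfl
  have hTdef : ∀ n, T n = stOf r Ms hr (hist n ++ [ρ n]) := fun n => rfl
  have hV1step : ∀ n, ρ n ∈ G.V1 → ρ n ∉ WW G r Ms →
      ρ (n + 1) = bmove G r Ms hr htot (ρ n) (T n) := by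
    intro n h1 hnW
    have h := outcome_succ G f1 f2 G.init n
    have hrn : ρ n = (G.run f1 f2 G.init n).2 := rfl
    rw [← hrn] at h
    rw [if_pos h1] at h
    show G.outcomeFrom f1 f2 G.init (n + 1) = _
    rw [h, hf1def, f1B, dif_pos ⟨hnW, h1⟩]
    rfl
  have hV2step : ∀ n, ρ n ∉ G.V1 →
      ρ (n + 1) = f2 (hist n) (ρ n) ∧ G.E (ρ n) (ρ (n + 1)) := by
    intro n h1
    have h := outcome_succ G f1 f2 G.init n
    have hrn : ρ n = (G.run f1 f2 G.init n).2 := rfl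
    rw [← hrn] at h
    rw [if_neg h1] at h
    constructor
    · exact h
    · have h' : ρ (n + 1) = f2 (G.run f1 f2 G.init n).1 (ρ n) := h
      rw [h', hrn]
      exact hf2 _ _ (hG2 _ h1)
  have hInv : ∀ n, ρ n ∉ WW G r Ms := by
    intro n
    induction n with
    | zero => rw [hρ0]; exact hinit
    | succ n ih =>
      by_cases h1 : ρ n ∈ G.V1
      · rw [hV1step n h1 ih]
        exact bmove_notWW G r Ms hr htot _ ih
      · exact stayout_V2 G r Ms ih h1 ((hV2step n h1).2)
  have hTsucc : ∀ n, T (n + 1) = adv r Ms hr (T n) (ρ (n + 1)) := by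
    intro n
    show stOf r Ms hr (hist (n + 1) ++ [ρ (n + 1)]) = _
    rw [stOf, List.foldl_append]
    rfl
  have hTdich : ∀ n, T (n + 1) = T n ∨ T (n + 1) = T n + 1 := by
    intro n
    rw [hTsucc n, adv]
    split
    · exact Or.inl rfl
    · exact Or.inr rfl
  have hTeq_mem : ∀ n, T (n + 1) = T n → ρ (n + 1) ∈ Mt r Ms hr (T n) := by
    intro n h
    by_contra hc
    rw [hTsucc n, adv, if_neg hc] at h
    omega
  have hTsucc_not : ∀ n, T (n + 1) = T n + 1 → ρ (n + 1) ∉ Mt r Ms hr (T n) := by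
    intro n h hc
    rw [hTsucc n, adv, if_pos hc] at h
    omega
  have hTmono : ∀ m n, m ≤ n → T m ≤ T n := by
    intro m n hmn
    induction n with
    | zero => simp_all
    | succ n ih =>
      rcases Nat.eq_or_lt_of_le hmn with rfl | h'
      · exact le_rfl
      · have := ih (Nat.lt_succ_iff.mp h')
        rcases hTdich n with h | h <;> omega
  have hTle : ∀ n, T n ≤ n + 1 := by
    intro n
    induction n with
    | zero =>
      have : T 0 = adv r Ms hr 0 (ρ 0) := by
        show stOf r Ms hr (hist 0 ++ [ρ 0]) = _
        rfl
      rw [this, adv]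
      split <;> omega
    | succ n ih =>
      rcases hTdich n with h | h <;> omega
  -- there is always another jump
  have hjump : ∀ n, ∃ m, n ≤ m ∧ T (m + 1) = T m + 1 := by
    intro n
    by_contra hc
    push_neg at hc
    have hceq : ∀ m, n ≤ m → T (m + 1) = T m := by
      intro m hm
      rcases hTdich m with h | h
      · exact h
      · exact absurd h (hc m hm)
    have hconst : ∀ m, n ≤ m → T m = T n := by
      intro m hm
      induction m with
      | zero => simp_all
      | succ m ih =>
        rcases Nat.eq_or_lt_of_le hm with h' | h'
        · rw [← h']
        · have hm' : n ≤ m := Nat.lt_succ_iff.mp h'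
          rw [hceq m hm', ih hm']
    have hmemMt : ∀ m, n ≤ m → ρ (m + 1) ∈ Mt r Ms hr (T n) := by
      intro m hm
      have := hTeq_mem m (hceq m hm)
      rwa [hconst m hm] at this
    have hdec : ∀ m, n ≤ m →
        esc G r Ms (Mt r Ms hr (T n)) (ρ (m + 1 + 1)) + 1 ≤
          esc G r Ms (Mt r Ms hr (T n)) (ρ (m + 1)) := by
      intro m hm
      have hMm : ρ (m + 1) ∈ Mt r Ms hr (T n) := hmemMt m hm
      have hge2 := esc_ge2 G r Ms hr htot (hInv (m + 1)) hMm
      by_cases h1 : ρ (m + 1) ∈ G.V1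
      · have hstep := hV1step (m + 1) h1 (hInv (m + 1))
        have hTm : T (m + 1) = T n := hconst (m + 1) (by omega)
        rw [hTm] at hstep
        have hesc := bmove_escape G r Ms hr htot (hInv (m + 1)) h1 hMm
        rw [← hstep] at hesc
        have := esc_le G r Ms hr (t := T n) hesc
        omega
      · obtain ⟨_, hE⟩ := hV2step (m + 1) h1
        have hnot := esc_spec G r Ms hr (t := T n) (v := ρ (m + 1)) (hInv (m + 1))
        obtain ⟨e, he⟩ : ∃ e, esc G r Ms (Mt r Ms hr (T n)) (ρ (m + 1)) = e + 1 :=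
          ⟨esc G r Ms (Mt r Ms hr (T n)) (ρ (m + 1)) - 1, by omega⟩
        rw [he] at hnot
        have hnotc : ρ (m + 1) ∉
            cpre G (safeIter G (Mt r Ms hr (T n)) (WW G r Ms) e ∪ WW G r Ms) := by
          intro hcpre
          exact hnot ⟨hMm, hcpre⟩
        rw [cpre] at hnotc
        simp only [Set.mem_setOf_eq, not_or, not_and, not_exists] at hnotc
        obtain ⟨_, hB⟩ := hnotc
        have := hB h1
        have hnotin := this (ρ (m + 1 + 1)) hE
        have hesc2 : ρ (m + 1 + 1) ∉ safeIter G (Mt r Ms hr (T n)) (WW G r Ms) e :=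
          fun h => hnotin (Or.inl h)
        have := esc_le G r Ms hr (t := T n) hesc2
        omega
    have habs : ∀ j, esc G r Ms (Mt r Ms hr (T n)) (ρ (n + 1 + j)) + j ≤
        esc G r Ms (Mt r Ms hr (T n)) (ρ (n + 1)) := by
      intro j
      induction j with
      | zero => simp
      | succ j ih =>
        have := hdec (n + j) (by omega)
        have he1 : n + j + 1 + 1 = n + 1 + (j + 1) := by omega
        have he2 : n + j + 1 = n + 1 + j := by omega
        rw [he1, he2] at this
        omega
    have h2 : 2 ≤ esc G r Ms (Mt r Ms hr (T n))
        (ρ (n + 1 + (esc G r Ms (Mt r Ms hr (T n)) (ρ (n + 1))))) := by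
      have hm : ρ (n + (esc G r Ms (Mt r Ms hr (T n)) (ρ (n + 1))) + 1) ∈ Mt r Ms hr (T n) :=
        hmemMt _ (by omega)
      have he : n + 1 + (esc G r Ms (Mt r Ms hr (T n)) (ρ (n + 1))) =
          n + (esc G r Ms (Mt r Ms hr (T n)) (ρ (n + 1))) + 1 := by omega
      rw [he]
      exact esc_ge2 G r Ms hr htot (hInv _) hm
    have := habs (esc G r Ms (Mt r Ms hr (T n)) (ρ (n + 1)))
    omega
  -- T is unbounded
  have hub : ∀ K, ∃ m, K ≤ T m := by
    intro K
    induction K with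
    | zero => exact ⟨0, Nat.zero_le _⟩
    | succ K ih =>
      obtain ⟨m, hm⟩ := ih
      obtain ⟨m', hm', hj⟩ := hjump m
      exact ⟨m' + 1, by have := hTmono m m' hm'; omega⟩
  -- discrete intermediate value theorem
  have hivt : ∀ b x, T 0 ≤ x → x ≤ T b → ∃ p, p ≤ b ∧ T p = x := by
    intro b
    induction b with
    | zero => intro x h1 h2; exact ⟨0, le_rfl, by omega⟩
    | succ b ih =>
      intro x h1 h2
      by_cases h : x ≤ T b
      · obtain ⟨p, hp1, hp2⟩ := ih x h1 h
        exact ⟨p, by omega, hp2⟩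
      · rcases hTdich b with hd | hd <;> exact ⟨b + 1, le_rfl, by omega⟩
  -- every level x ≥ T 0 is "left", witnessing a vertex outside Mt x
  have hleave : ∀ x, T 0 ≤ x → ∃ m, T m = x ∧ ρ (m + 1) ∉ Mt r Ms hr x ∧ x ≤ m + 1 := by
    intro x hx
    obtain ⟨b, hb⟩ := hub (x + 1)
    obtain ⟨p, hpb, hp⟩ := hivt b x hx (by omega)
    have hq : ∃ q, p ≤ q ∧ x < T q := ⟨b, hpb, by omega⟩
    obtain ⟨hm'1, hm'2⟩ := Nat.find_spec hq
    have hm'ne : Nat.find hq ≠ p := by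
      intro h
      rw [h, hp] at hm'2
      omega
    obtain ⟨m, hm⟩ : ∃ m, Nat.find hq = m + 1 := ⟨Nat.find hq - 1, by omega⟩
    rw [hm] at hm'1 hm'2
    have hmlt : ¬ (p ≤ m ∧ x < T m) := Nat.find_min hq (by omega)
    have hpm : p ≤ m := by omega
    have hTmx : T m = x := by
      have h1 : T p ≤ T m := hTmono p m hpm
      rcases not_and_or.mp hmlt with h | h
      · omega
      · push_neg at h
        omega
    have hjmp : T (m + 1) = T m + 1 := by
      rcases hTdich m with h | h
      · omega
      · exact h
    refine ⟨m, hTmx, ?_, by have := hTle m; omega⟩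
    have := hTsucc_not m hjmp
    rwa [hTmx] at this
  -- conclusion
  intro i hsub
  have hP : ∀ K, ∃ n, K ≤ n ∧ ρ n ∉ Ms i := by
    intro K
    set x := (i : ℕ) + r * (K + T 0 + 1) with hxdef
    have hrx : K + T 0 + 1 ≤ r * (K + T 0 + 1) := Nat.le_mul_of_pos_left _ hr
    have hx1 : T 0 ≤ x := by omega
    have hxmod : x % r = (i : ℕ) := by
      rw [hxdef, Nat.add_mul_mod_self_left, Nat.mod_eq_of_lt i.isLt]
    obtain ⟨m, hTm, hnot, hxm⟩ := hleave x hx1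
    have hMteq : Mt r Ms hr x = Ms i := by
      have hfin : (⟨x % r, Nat.mod_lt x hr⟩ : Fin r) = i := Fin.ext hxmod
      exact congrArg Ms hfin
    exact ⟨m + 1, by omega, by rw [← hMteq]; exact hnot⟩
  obtain ⟨u, hu1, hu2⟩ := pigeonhole ρ (fun u => u ∉ Ms i) hP
  exact hu1 (hsub hu2)

include hr htot in
/-- Main lemma: memoryless transfer for "eventual containment" objectives. -/
lemma main_memoryless (hG2 : ∀ v, v ∉ G.V1 → v ∈ G.V2)
    (f2 : Strat V) (hf2 : G.IsStrategy2 f2)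
    (hwin : ∀ f1, G.IsStrategy1 f1 → ∃ i : Fin r, infSet (G.outcome f1 f2) ⊆ Ms i) :
    ∃ g : Strat V, G.IsStrategy2 g ∧ IsMemoryless g ∧
      ∀ f1, G.IsStrategy1 f1 → ∃ i : Fin r, infSet (G.outcome f1 g) ⊆ Ms i := by
  by_cases hinit : G.init ∈ WW G r Ms
  · refine ⟨fun _ v => gmem G r Ms hr htot v, ?_, ?_, ?_⟩
    · intro h v _
      exact gmem_E G r Ms hr htot v
    · intro h h' v
      rfl
    · intro f1 hf1
      exact partA G r Ms hr htot hinit f1 hf1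
  · obtain ⟨f1, hf1, hbad⟩ := partB G r Ms hr htot hG2 hinit f2 hf2
    obtain ⟨i, hi⟩ := hwin f1 hf1
    exact absurd hi (hbad i)

end PartA

end WithMs
end Cov

/-- in a Büchi coverage game, Disruptor has a disrupting strategy iff
she has a memoryless disrupting strategy. -/
theorem stmt12 {V : Type u} [Fintype V] (G : GameGraph V) (hG : G.WellFormed)
    (k : ℕ) (hk : 1 ≤ k) (β : Finset (Set V)) :
    DisruptorWins G ObjKind.buchi k β ↔
      ∃ f2, G.IsStrategy2 f2 ∧ IsMemoryless f2 ∧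
        IsDisrupting G ObjKind.buchi k β f2 := by
  constructor
  · rintro ⟨f2, hf2, hd⟩
    classical
    have htot : ∀ v, ∃ u, G.E v u := hG.2.2
    have hG2 : ∀ v, v ∉ G.V1 → v ∈ G.V2 := by
      intro v hv
      have hmem : v ∈ G.V1 ∪ G.V2 := by
        rw [hG.2.1]
        trivial
      rcases hmem with h | h
      · exact absurd h hv
      · exact h
    -- the family of "good" sets: sets whose profile is coverable against f2
    set Good : Set V → Prop := fun M => ∃ f1, G.IsStrategy1 f1 ∧ ∀ α ∈ β,
      (M ∩ α).Nonempty → (infSet (G.outcome f1 f2) ∩ α).Nonempty with hGoodDef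
    have hGoodInf : ∀ f1, G.IsStrategy1 f1 → Good (infSet (G.outcome f1 f2)) := by
      intro f1 hf1
      exact ⟨f1, hf1, fun α _ h => h⟩
    have hfin : (setOf Good).Finite := Set.toFinite _
    have hne : Good (infSet (G.outcome (fun _ v => (htot v).choose) f2)) :=
      hGoodInf _ (fun h v _ => (htot v).choose_spec)
    set Fs : Finset (Set V) := hfin.toFinset with hFsDef
    have hrpos : 0 < Fs.card :=
      Finset.card_pos.mpr ⟨_, hfin.mem_toFinset.mpr hne⟩
    set Ms : Fin Fs.card → Set V := fun i => ((Fs.equivFin.symm i : Fs) : Set V) with hMsDef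
    have hMsmem : ∀ i, Good (Ms i) := fun i =>
      hfin.mem_toFinset.mp (Fs.equivFin.symm i).2
    have hMscover : ∀ M, Good M → ∃ i, Ms i = M := by
      intro M hM
      refine ⟨Fs.equivFin ⟨M, hfin.mem_toFinset.mpr hM⟩, ?_⟩
      simp [hMsDef]
    have hwin : ∀ f1, G.IsStrategy1 f1 → ∃ i, infSet (G.outcome f1 f2) ⊆ Ms i := by
      intro f1 hf1
      obtain ⟨i, hi⟩ := hMscover _ (hGoodInf f1 hf1)
      exact ⟨i, by rw [hi]⟩
    obtain ⟨g, hg2, hgm, hgwin⟩ :=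
      Cov.main_memoryless G Fs.card Ms hrpos htot hG2 f2 hf2 hwin
    refine ⟨g, hg2, hgm, ?_⟩
    intro F hF
    choose jj hjj using fun i => hgwin (F i) (hF i)
    have hgood : ∀ i : Fin k, Good (Ms (jj i)) := fun i => hMsmem (jj i)
    choose w hw1 hw2 using hgood
    obtain ⟨α, hα, hmiss⟩ := hd w hw1
    refine ⟨α, hα, ?_⟩
    intro i hsat
    have hsat' : (infSet (G.outcome (F i) g) ∩ α).Nonempty := hsat
    obtain ⟨u, hu1, hu2⟩ := hsat'
    have hM : (Ms (jj i) ∩ α).Nonempty := ⟨u, hjj i hu1, hu2⟩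
    have : (infSet (G.outcome (w i) f2) ∩ α).Nonempty := hw2 i α hα hM
    exact hmiss i this
  · rintro ⟨g, h1, _, h3⟩
    exact ⟨g, h1, h3⟩
end

section
/- Let (G, δ) be an AllB game with δ = {α₁, …, α_m}. Player 1 has a winning strategy in (G, δ) if and only if there exist a set of vertices U ⊆ V and a fairness requirement g for Player 1 such that: (i) there exists a Player-1 strategy that is a U-trap and respects g; and (ii) every Player-1 strategy that is a U-trap and respects g is a winning strategy for Player 1 in (G, δ). -/
open scoped Classical

universe u

variable {V : Type u}

/-- Player 1 wins the AllB game (G, δ). -/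
def P1WinsAllB (G : GameGraph V) (δ : Finset (Set V)) : Prop :=
  ∃ f1, G.IsStrategy1 f1 ∧ ∀ f2, G.IsStrategy2 f2 →
    ∀ α ∈ δ, SatObj ObjKind.buchi (G.outcome f1 f2) α

/-- A Player-1 strategy is a `U`-trap if all its outcomes eventually stay in `U`. -/
def IsTrap1 (G : GameGraph V) (U : Set V) (f1 : Strat V) : Prop :=
  ∀ f2, G.IsStrategy2 f2 → infSet (G.outcome f1 f2) ⊆ U

/-- `g` is a fairness requirement for Player 1: it maps each Player-1 vertex to a
nonempty set of its `E`-successors. -/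
def FairnessReq1 (G : GameGraph V) (g : V → Set V) : Prop :=
  ∀ v ∈ G.V1, (g v).Nonempty ∧ ∀ u ∈ g v, G.E v u

/-- A Player-1 strategy respects the fairness requirement `g`: it always chooses
successors within `g`, and at every Player-1 vertex visited infinitely often it
proceeds to each successor in `g` infinitely often. -/
def Respects1 (G : GameGraph V) (g : V → Set V) (f1 : Strat V) : Prop :=
  (∀ (h : List V) (v : V), v ∈ G.V1 → f1 h v ∈ g v) ∧
  ∀ f2, G.IsStrategy2 f2 → ∀ v ∈ G.V1, v ∈ infSet (G.outcome f1 f2) →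
    g v ⊆ infSet (G.outcome f1 f2)

namespace Stmt14Aux

open GameGraph

variable {V : Type u}

/-- Residual (shifted) strategy after a fixed history `H`. -/
def shiftS (f : Strat V) (H : List V) : Strat V := fun h v => f (H ++ h) v

lemma isStrategy1_shiftS {G : GameGraph V} {f : Strat V} (hf : G.IsStrategy1 f) (H : List V) :
    G.IsStrategy1 (shiftS f H) := fun h v hv => hf (H ++ h) v hv

lemma isStrategy2_shiftS {G : GameGraph V} {f : Strat V} (hf : G.IsStrategy2 f) (H : List V) :
    G.IsStrategy2 (shiftS f H) := fun h v hv => hf (H ++ h) v hv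

lemma run_zero (G : GameGraph V) (f1 f2 : Strat V) (v : V) :
    G.run f1 f2 v 0 = ([], v) := rfl

lemma run_succ (G : GameGraph V) (f1 f2 : Strat V) (v : V) (n : ℕ) :
    G.run f1 f2 v (n + 1) =
      ((G.run f1 f2 v n).1 ++ [(G.run f1 f2 v n).2],
        if (G.run f1 f2 v n).2 ∈ G.V1 then f1 (G.run f1 f2 v n).1 (G.run f1 f2 v n).2
        else f2 (G.run f1 f2 v n).1 (G.run f1 f2 v n).2) := rfl

lemma outcomeFrom_succ (G : GameGraph V) (f1 f2 : Strat V) (v : V) (n : ℕ) :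
    G.outcomeFrom f1 f2 v (n + 1) =
      if G.outcomeFrom f1 f2 v n ∈ G.V1 then f1 (G.run f1 f2 v n).1 (G.outcomeFrom f1 f2 v n)
      else f2 (G.run f1 f2 v n).1 (G.outcomeFrom f1 f2 v n) := rfl

lemma run_fst (G : GameGraph V) (f1 f2 : Strat V) (v : V) (n : ℕ) :
    (G.run f1 f2 v n).1 = (List.range n).map (G.outcomeFrom f1 f2 v) := by
  induction n with
  | zero => rfl
  | succ n ih =>
      rw [run_succ, List.range_succ, List.map_append, ← ih]
      rfl

lemma run_fst_length (G : GameGraph V) (f1 f2 : Strat V) (v : V) (n : ℕ) :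
    (G.run f1 f2 v n).1.length = n := by
  rw [run_fst]; simp

/-- Runs only depend on the strategies' values at short histories. -/
lemma run_congr (G : GameGraph V) (f1 f2 f2' : Strat V) (v : V) (n : ℕ)
    (h : ∀ (l : List V) (w : V), l.length < n → f2 l w = f2' l w) :
    ∀ k ≤ n, G.run f1 f2 v k = G.run f1 f2' v k := by
  intro k hk
  induction k with
  | zero => rfl
  | succ k ih =>
      have ih' := ih (Nat.le_of_succ_le hk)
      rw [run_succ, run_succ, ih']
      congr 1
      split
      · rfl
      · exact h _ _ (by rw [run_fst_length]; omega)

/-- Key shift lemma: running shifted strategies from the middle of a run. -/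
lemma run_shift (G : GameGraph V) (f1 f2 : Strat V) (v : V) (n : ℕ) : ∀ k,
    (G.run f1 f2 v n).1 ++
        (G.run (shiftS f1 (G.run f1 f2 v n).1) (shiftS f2 (G.run f1 f2 v n).1)
          (G.run f1 f2 v n).2 k).1 = (G.run f1 f2 v (n + k)).1 ∧
      (G.run (shiftS f1 (G.run f1 f2 v n).1) (shiftS f2 (G.run f1 f2 v n).1)
          (G.run f1 f2 v n).2 k).2 = (G.run f1 f2 v (n + k)).2 := by
  intro k
  induction k with
  | zero => simp [run_zero]
  | succ k ih =>
      obtain ⟨ih1, ih2⟩ := ih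
      unfold shiftS at ih1 ih2 ⊢
      constructor
      · rw [show n + (k+1) = (n+k) + 1 from rfl, run_succ, run_succ, ← List.append_assoc, ih1, ih2]
      · rw [show n + (k+1) = (n+k) + 1 from rfl, run_succ, run_succ, ih2]
        simp only [ih1]

lemma outcomeFrom_shift (G : GameGraph V) (f1 f2 : Strat V) (v : V) (n k : ℕ) :
    G.outcomeFrom (shiftS f1 (G.run f1 f2 v n).1) (shiftS f2 (G.run f1 f2 v n).1)
      (G.run f1 f2 v n).2 k = G.outcomeFrom f1 f2 v (n + k) :=
  (run_shift G f1 f2 v n k).2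

end Stmt14Aux
namespace Stmt14Aux

open GameGraph

variable {V : Type u}

lemma infSet_shift (ρ : ℕ → V) (n : ℕ) : infSet (fun k => ρ (n + k)) = infSet ρ := by
  ext u
  constructor
  · intro h m
    obtain ⟨k, hk, hu⟩ := h m
    exact ⟨n + k, le_trans hk (Nat.le_add_left _ _), hu⟩
  · intro h m
    obtain ⟨k, hk, hu⟩ := h (n + m)
    exact ⟨k - n, by omega, by show ρ (n + (k - n)) = u; rw [show n + (k - n) = k by omega]; exact hu⟩

lemma infSet_subset {ρ : ℕ → V} {S : Set V} (h : ∀ n, ρ n ∈ S) : infSet ρ ⊆ S := by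
  intro u hu
  obtain ⟨m, _, hm⟩ := hu 0
  exact hm ▸ h m

lemma infSet_nonempty [Fintype V] (ρ : ℕ → V) : (infSet ρ).Nonempty := by
  by_contra h
  rw [Set.not_nonempty_iff_eq_empty] at h
  have h' : ∀ u : V, ∃ n, ∀ m, n ≤ m → ρ m ≠ u := by
    intro u
    by_contra hu
    push_neg at hu
    have : u ∈ infSet ρ := by
      intro n
      obtain ⟨m, hm, he⟩ := hu n
      exact ⟨m, hm, he⟩
    simp [h] at this
  choose nf hnf using h'
  have hN := hnf (ρ (Finset.univ.sup nf)) (Finset.univ.sup nf)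
    (Finset.le_sup (Finset.mem_univ _)) rfl
  exact hN

lemma eventually_infSet [Fintype V] (ρ : ℕ → V) : ∃ N, ∀ n, N ≤ n → ρ n ∈ infSet ρ := by
  have h' : ∀ u : V, ∃ n, u ∈ infSet ρ ∨ ∀ m, n ≤ m → ρ m ≠ u := by
    intro u
    by_cases hu : u ∈ infSet ρ
    · exact ⟨0, Or.inl hu⟩
    · simp only [infSet, Set.mem_setOf_eq] at hu
      push_neg at hu
      obtain ⟨n, hn⟩ := hu
      exact ⟨n, Or.inr fun m hm => hn m hm⟩
  choose nf hnf using h'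
  refine ⟨Finset.univ.sup nf, fun n hn => ?_⟩
  rcases hnf (ρ n) with h | h
  · exact h
  · exact absurd rfl (h n (le_trans (Finset.le_sup (Finset.mem_univ _)) hn))

/-- `f1` is winning for Player 1 from `v`. -/
def Wins (G : GameGraph V) (δ : Finset (Set V)) (f1 : Strat V) (v : V) : Prop :=
  ∀ f2, G.IsStrategy2 f2 → ∀ α ∈ δ, SatObj ObjKind.buchi (G.outcomeFrom f1 f2 v) α

/-- The winning region of Player 1. -/
def Wset (G : GameGraph V) (δ : Finset (Set V)) : Set V :=
  { v | ∃ f1, G.IsStrategy1 f1 ∧ Wins G δ f1 v }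

/-- Residuals of winning strategies along consistent histories remain winning. -/
lemma wins_residual {G : GameGraph V} {δ : Finset (Set V)} {f1 : Strat V} {v : V}
    (hw : Wins G δ f1 v) {f2₀ : Strat V} (hf2₀ : G.IsStrategy2 f2₀) (n : ℕ) :
    Wins G δ (shiftS f1 (G.run f1 f2₀ v n).1) (G.run f1 f2₀ v n).2 := by
  intro f2'' hf2'' α hα
  classical
  set L := (G.run f1 f2₀ v n).1 with hL
  have hLlen : L.length = n := run_fst_length G f1 f2₀ v n
  set f2 : Strat V := fun h w => if h.length < n then f2₀ h w else f2'' (h.drop n) w with hf2def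
  have hf2 : G.IsStrategy2 f2 := by
    intro h w hw2
    by_cases hc : h.length < n
    · simpa [hf2def, hc] using hf2₀ h w hw2
    · simpa [hf2def, hc] using hf2'' (h.drop n) w hw2
  have hrun : G.run f1 f2 v n = G.run f1 f2₀ v n := by
    refine run_congr G f1 f2 f2₀ v n ?_ n le_rfl
    intro l w hl
    simp [hf2def, hl]
  have hshift : shiftS f2 L = f2'' := by
    funext h w
    have h1 : (L ++ h).length < n ↔ False := by
      simp [hLlen]
    simp [shiftS, hf2def, h1, hLlen]
  have hout : ∀ k, G.outcomeFrom (shiftS f1 L) f2'' (G.run f1 f2₀ v n).2 k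
      = G.outcomeFrom f1 f2 v (n + k) := by
    intro k
    rw [← hshift]
    have := outcomeFrom_shift G f1 f2 v n k
    rw [hrun] at this
    exact this
  have hsat := hw f2 hf2 α hα
  have heq : (G.outcomeFrom (shiftS f1 L) f2'' (G.run f1 f2₀ v n).2)
      = fun k => G.outcomeFrom f1 f2 v (n + k) := funext hout
  show (infSet (G.outcomeFrom (shiftS f1 L) f2'' (G.run f1 f2₀ v n).2) ∩ α).Nonempty
  rw [heq, infSet_shift]
  exact hsat

lemma run_mem_Wset {G : GameGraph V} {δ : Finset (Set V)} {f1 : Strat V} {v : V}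
    (hf1 : G.IsStrategy1 f1) (hw : Wins G δ f1 v) {f2₀ : Strat V}
    (hf2₀ : G.IsStrategy2 f2₀) (n : ℕ) :
    (G.run f1 f2₀ v n).2 ∈ Wset G δ :=
  ⟨shiftS f1 (G.run f1 f2₀ v n).1, isStrategy1_shiftS hf1 _, wins_residual hw hf2₀ n⟩

end Stmt14Aux
namespace Stmt14Aux

open GameGraph

variable {V : Type u}

noncomputable def suc (G : GameGraph V) (hG : G.WellFormed) : V → V :=
  fun v => (hG.2.2 v).choose

lemma suc_spec (G : GameGraph V) (hG : G.WellFormed) (v : V) : G.E v (suc G hG v) :=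
  (hG.2.2 v).choose_spec

noncomputable def f2dflt (G : GameGraph V) (hG : G.WellFormed) : Strat V :=
  fun _ w => suc G hG w

lemma f2dflt_strat (G : GameGraph V) (hG : G.WellFormed) : G.IsStrategy2 (f2dflt G hG) :=
  fun _ w _ => suc_spec G hG w

lemma not_mem_V1 {G : GameGraph V} (hG : G.WellFormed) {v : V} (hv : v ∈ G.V2) : v ∉ G.V1 :=
  fun h1 => hG.1.ne_of_mem h1 hv rfl

lemma mem_V1_or_V2 {G : GameGraph V} (hG : G.WellFormed) (v : V) : v ∈ G.V1 ∨ v ∈ G.V2 := by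
  have : v ∈ G.V1 ∪ G.V2 := hG.2.1 ▸ Set.mem_univ v
  exact this

/-- (a): Player-1 vertices of the winning region have a winning-region successor,
namely the first move of the winning strategy. -/
lemma Wset_V1_succ {G : GameGraph V} (hG : G.WellFormed) {δ : Finset (Set V)} {v : V}
    (hv : v ∈ Wset G δ) (h1 : v ∈ G.V1) : ∃ u, G.E v u ∧ u ∈ Wset G δ := by
  obtain ⟨f1, hf1, hw⟩ := hv
  refine ⟨f1 [] v, hf1 [] v h1, ?_⟩
  have h := run_mem_Wset hf1 hw (f2dflt_strat G hG) 1
  have hr : G.run f1 (f2dflt G hG) v 1 = ([v], f1 [] v) := by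
    rw [run_succ, run_zero]
    simp [h1]
  rwa [hr] at h

/-- (b): all successors of Player-2 vertices of the winning region are winning. -/
lemma Wset_V2_succ {G : GameGraph V} (hG : G.WellFormed) {δ : Finset (Set V)} {v u : V}
    (hv : v ∈ Wset G δ) (h2 : v ∈ G.V2) (hE : G.E v u) : u ∈ Wset G δ := by
  classical
  obtain ⟨f1, hf1, hw⟩ := hv
  set f2 : Strat V := fun h w => if h = [] ∧ w = v then u else suc G hG w with hf2def
  have hf2 : G.IsStrategy2 f2 := by
    intro h w _
    by_cases hc : h = [] ∧ w = v
    · simpa [hf2def, hc, hc.2] using hc.2 ▸ hE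
    · simpa [hf2def, hc] using suc_spec G hG w
  have h := run_mem_Wset hf1 hw hf2 1
  have hr : G.run f1 f2 v 1 = ([v], u) := by
    rw [run_succ, run_zero]
    simp [not_mem_V1 hG h2, hf2def]
  rwa [hr] at h

section Attractor

variable (G : GameGraph V) (δ : Finset (Set V)) (α : Set V)

/-- One step of the Player-1 attractor inside the winning region. -/
def attrStep (S : Set V) : Set V :=
  S ∪ {v | v ∈ G.V1 ∧ v ∈ Wset G δ ∧ ∃ u, G.E v u ∧ u ∈ S}
    ∪ {v | v ∈ G.V2 ∧ v ∈ Wset G δ ∧ ∀ u, G.E v u → u ∈ S}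

/-- The attractor levels towards `α` inside the winning region. -/
def attr : ℕ → Set V
  | 0 => α ∩ Wset G δ
  | n + 1 => attrStep G δ (attr n)

/-- The full attractor. -/
def attrX : Set V := ⋃ n, attr G δ α n

lemma attr_mono : Monotone (attr G δ α) := by
  apply monotone_nat_of_le_succ
  intro n
  exact fun v hv => Or.inl (Or.inl hv)

lemma attr_subset_W : ∀ n, attr G δ α n ⊆ Wset G δ := by
  intro n
  induction n with
  | zero => exact Set.inter_subset_right
  | succ n ih =>
      rintro v ((hv | hv) | hv)
      · exact ih hv
      · exact hv.2.1
      · exact hv.2.1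

lemma attrX_subset_W : attrX G δ α ⊆ Wset G δ := by
  intro v hv
  obtain ⟨_, ⟨n, rfl⟩, hv⟩ := hv
  exact attr_subset_W G δ α n hv

lemma finite_subset_attr [Fintype V] {S : Set V} (hS : S ⊆ attrX G δ α) :
    ∃ N, S ⊆ attr G δ α N := by
  classical
  have h : ∀ u : V, u ∈ S → ∃ n, u ∈ attr G δ α n := by
    intro u hu
    exact Set.mem_iUnion.1 (hS hu)
  choose nf hnf using h
  refine ⟨Finset.univ.sup (fun u => if h : u ∈ S then nf u h else 0), fun u hu => ?_⟩
  have hle : nf u hu ≤ Finset.univ.sup (fun u => if h : u ∈ S then nf u h else 0) := by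
    have := Finset.le_sup (f := fun u => if h : u ∈ S then nf u h else 0)
      (Finset.mem_univ u)
    simpa [hu] using this
  exact attr_mono G δ α hle (hnf u hu)

/-- The rank of a vertex in the attractor. -/
noncomputable def rk (v : V) : ℕ :=
  if h : ∃ n, v ∈ attr G δ α n then Nat.find h else 0

lemma mem_attr_rk {v : V} (hv : v ∈ attrX G δ α) : v ∈ attr G δ α (rk G δ α v) := by
  have h : ∃ n, v ∈ attr G δ α n := Set.mem_iUnion.1 hv
  simp only [rk, dif_pos h]
  exact Nat.find_spec h

lemma rk_le_of_mem {v : V} {n : ℕ} (hv : v ∈ attr G δ α n) : rk G δ α v ≤ n := by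
  have h : ∃ n, v ∈ attr G δ α n := ⟨n, hv⟩
  simp only [rk, dif_pos h]
  exact Nat.find_le hv

end Attractor

end Stmt14Aux
namespace Stmt14Aux

open GameGraph

variable {V : Type u}

/-- (c): the winning region is contained in the attractor of each objective. -/
lemma Wset_subset_attrX [Fintype V] {G : GameGraph V} (hG : G.WellFormed)
    {δ : Finset (Set V)} {α : Set V} (hα : α ∈ δ) :
    Wset G δ ⊆ attrX G δ α := by
  classical
  intro v hv
  by_contra hvX
  obtain ⟨f1, hf1, hw⟩ := hv
  -- Player 2 escapes the attractor whenever possible.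
  set f2 : Strat V := fun _ w =>
    if h : ∃ u, G.E w u ∧ u ∉ attrX G δ α then h.choose else suc G hG w with hf2def
  have hf2 : G.IsStrategy2 f2 := by
    intro h w _
    by_cases hc : ∃ u, G.E w u ∧ u ∉ attrX G δ α
    · simpa [hf2def, hc] using hc.choose_spec.1
    · simpa [hf2def, hc] using suc_spec G hG w
  set ρ := G.outcomeFrom f1 f2 v with hρ
  have hWn : ∀ n, ρ n ∈ Wset G δ := fun n => run_mem_Wset hf1 hw hf2 n
  have hmain : ∀ n, ρ n ∉ attrX G δ α := by
    intro n
    induction n with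
    | zero => exact hvX
    | succ n ih =>
        set w := ρ n with hwdef
        rcases mem_V1_or_V2 hG w with h1 | h2
        · -- Player 1 moves; the move stays winning, and cannot enter the attractor.
          have hnext : ρ (n + 1) = f1 (G.run f1 f2 v n).1 w := by
            rw [hρ, outcomeFrom_succ]
            simp [← hρ, ← hwdef, h1]
          intro hmem
          obtain ⟨_, ⟨m, rfl⟩, hm⟩ := hmem
          exact ih (Set.mem_iUnion.2 ⟨m + 1, Or.inl (Or.inr
            ⟨h1, hWn n, ρ (n + 1), hnext ▸ hf1 (G.run f1 f2 v n).1 w h1, hm⟩)⟩)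
        · -- Player 2 moves; by construction it can escape the attractor.
          have hex : ∃ u, G.E w u ∧ u ∉ attrX G δ α := by
            by_contra hno
            push_neg at hno
            have hsub : {u | G.E w u} ⊆ attrX G δ α := fun u hu => hno u hu
            obtain ⟨N, hN⟩ := finite_subset_attr G δ α hsub
            exact ih (Set.mem_iUnion.2 ⟨N + 1, Or.inr ⟨h2, hWn n, fun u hu => hN hu⟩⟩)
          have hnext : ρ (n + 1) = f2 (G.run f1 f2 v n).1 w := by
            rw [hρ, outcomeFrom_succ]
            simp [← hρ, ← hwdef, not_mem_V1 hG h2]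
          rw [hnext]
          simpa [hf2def, hex] using hex.choose_spec.2
  -- but `f1` wins, so the play visits `α` infinitely often, inside `Wset`.
  have hsat := hw f2 hf2 α hα
  obtain ⟨u, huI, huα⟩ := hsat
  obtain ⟨m, _, hm⟩ := huI 0
  have hm' : ρ m = u := hm
  have : u ∈ attr G δ α 0 := ⟨huα, hm' ▸ hWn m⟩
  exact (hm' ▸ hmain m) (Set.mem_iUnion.2 ⟨0, this⟩)

end Stmt14Aux
namespace Stmt14Aux

open GameGraph

variable {V : Type u}

/-- The fairness requirement: in the winning region, all winning-region successors. -/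
noncomputable def gFair (G : GameGraph V) (δ : Finset (Set V)) (hG : G.WellFormed) :
    V → Set V := fun v =>
  if v ∈ G.V1 ∧ v ∈ Wset G δ then {u | G.E v u ∧ u ∈ Wset G δ} else {suc G hG v}

lemma gFair_fairness {G : GameGraph V} {δ : Finset (Set V)} (hG : G.WellFormed) :
    FairnessReq1 G (gFair G δ hG) := by
  intro v hv
  by_cases hW : v ∈ Wset G δ
  · rw [gFair, if_pos ⟨hv, hW⟩]
    obtain ⟨u, hu1, hu2⟩ := Wset_V1_succ hG hW hv
    exact ⟨⟨u, hu1, hu2⟩, fun u hu => hu.1⟩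
  · rw [gFair, if_neg (by tauto)]
    exact ⟨⟨suc G hG v, rfl⟩, by rintro u rfl; exact suc_spec G hG v⟩

lemma gFair_subset_W {G : GameGraph V} {δ : Finset (Set V)} (hG : G.WellFormed) {v : V}
    (h1 : v ∈ G.V1) (hW : v ∈ Wset G δ) : gFair G δ hG v ⊆ Wset G δ := by
  rw [gFair, if_pos ⟨h1, hW⟩]
  exact fun u hu => hu.2

/-- In the winning region, a Player-1 vertex not in `α` has a good successor of
smaller rank. -/
lemma exists_decreasing [Fintype V] {G : GameGraph V} (hG : G.WellFormed)
    {δ : Finset (Set V)} {α : Set V} (hα : α ∈ δ) {v : V}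
    (h1 : v ∈ G.V1) (hvW : v ∈ Wset G δ) (hvα : v ∉ α) :
    ∃ u ∈ gFair G δ hG v, rk G δ α u < rk G δ α v := by
  have hvX : v ∈ attrX G δ α := Wset_subset_attrX hG hα hvW
  have hvn := mem_attr_rk G δ α hvX
  rcases hn : rk G δ α v with _ | m
  · rw [hn] at hvn
    exact absurd hvn.1 hvα
  · rw [hn] at hvn
    rcases hvn with (hv | hv) | hv
    · have := rk_le_of_mem G δ α hv
      omega
    · obtain ⟨_, _, u, hEu, huA⟩ := hv
      refine ⟨u, ?_, ?_⟩
      · rw [gFair, if_pos ⟨h1, hvW⟩]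
        exact ⟨hEu, attr_subset_W G δ α m huA⟩
      · have := rk_le_of_mem G δ α huA
        omega
    · exact absurd h1 (not_mem_V1 hG hv.1)

/-- Counting occurrences of `v` in a history list. -/
noncomputable def hcnt (h : List V) (v : V) : ℕ := (h.filter (fun x => x = v)).length

/-- Counting occurrences of `v` among the first `n` values of a play. -/
noncomputable def cnt (ρ : ℕ → V) (v : V) (n : ℕ) : ℕ := hcnt ((List.range n).map ρ) v

lemma cnt_zero (ρ : ℕ → V) (v : V) : cnt ρ v 0 = 0 := rfl

lemma cnt_succ (ρ : ℕ → V) (v : V) (n : ℕ) :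
    cnt ρ v (n + 1) = cnt ρ v n + (if ρ n = v then 1 else 0) := by
  unfold cnt hcnt
  rw [List.range_succ, List.map_append, List.filter_append, List.length_append]
  congr 1
  by_cases h : ρ n = v <;> simp [h]

lemma cnt_mono (ρ : ℕ → V) (v : V) : Monotone (cnt ρ v) := by
  apply monotone_nat_of_le_succ
  intro n
  rw [cnt_succ]
  omega

lemma cnt_unbounded {ρ : ℕ → V} {v : V} (hv : v ∈ infSet ρ) (k : ℕ) :
    ∃ p, k ≤ cnt ρ v p := by
  induction k with
  | zero => exact ⟨0, Nat.zero_le _⟩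
  | succ k ih =>
      obtain ⟨p, hp⟩ := ih
      obtain ⟨m, hm, hρm⟩ := hv p
      refine ⟨m + 1, ?_⟩
      rw [cnt_succ, if_pos hρm]
      have := cnt_mono ρ v hm
      omega

/-- Enumeration of the fairness set as a list. -/
noncomputable def lst (G : GameGraph V) (δ : Finset (Set V)) (hG : G.WellFormed)
    [Fintype V] (v : V) : List V := (Set.toFinite (gFair G δ hG v)).toFinset.toList

lemma mem_lst [Fintype V] {G : GameGraph V} {δ : Finset (Set V)} {hG : G.WellFormed}
    {v u : V} : u ∈ lst G δ hG v ↔ u ∈ gFair G δ hG v := by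
  rw [lst, Finset.mem_toList, Set.Finite.mem_toFinset]

lemma lst_pos [Fintype V] {G : GameGraph V} {δ : Finset (Set V)} {hG : G.WellFormed}
    {v : V} (hv : v ∈ G.V1) : 0 < (lst G δ hG v).length := by
  obtain ⟨u, hu⟩ := (gFair_fairness hG v hv).1
  have : u ∈ lst G δ hG v := mem_lst.2 hu
  exact List.length_pos_iff.2 (fun he => by rw [he] at this; exact (List.not_mem_nil (a := u)) this)

/-- The fair witness strategy: cycle through the fairness set according to the
number of past visits. -/
noncomputable def f1wit (G : GameGraph V) (δ : Finset (Set V)) (hG : G.WellFormed)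
    [Fintype V] : Strat V := fun h v =>
  (lst G δ hG v).getD (hcnt h v % (lst G δ hG v).length) (suc G hG v)

lemma f1wit_mem [Fintype V] {G : GameGraph V} {δ : Finset (Set V)} (hG : G.WellFormed)
    (h : List V) {v : V} (hv : v ∈ G.V1) : f1wit G δ hG h v ∈ gFair G δ hG v := by
  rw [f1wit]
  have hlen := lst_pos (hG := hG) (δ := δ) hv
  have hlt : hcnt h v % (lst G δ hG v).length < (lst G δ hG v).length :=
    Nat.mod_lt _ hlen
  rw [List.getD_eq_getElem _ _ hlt]
  exact mem_lst.1 (List.getElem_mem _)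

lemma f1wit_strat [Fintype V] {G : GameGraph V} {δ : Finset (Set V)} (hG : G.WellFormed) :
    G.IsStrategy1 (f1wit G δ hG) := by
  intro h v hv
  exact ((gFair_fairness hG v hv).2 _ (f1wit_mem hG h hv))

end Stmt14Aux
namespace Stmt14Aux

open GameGraph

variable {V : Type u}

lemma f1wit_stays [Fintype V] {G : GameGraph V} {δ : Finset (Set V)} (hG : G.WellFormed)
    {f2 : Strat V} (hf2 : G.IsStrategy2 f2) {v : V} (hv : v ∈ Wset G δ) :
    ∀ n, G.outcomeFrom (f1wit G δ hG) f2 v n ∈ Wset G δ := by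
  intro n
  induction n with
  | zero => exact hv
  | succ n ih =>
      rcases mem_V1_or_V2 hG (G.outcomeFrom (f1wit G δ hG) f2 v n) with h1 | h2
      · rw [outcomeFrom_succ, if_pos h1]
        exact gFair_subset_W hG h1 ih (f1wit_mem hG _ h1)
      · rw [outcomeFrom_succ, if_neg (not_mem_V1 hG h2)]
        exact Wset_V2_succ hG ih h2 (hf2 _ _ h2)

lemma f1wit_trap [Fintype V] {G : GameGraph V} {δ : Finset (Set V)} (hG : G.WellFormed)
    (hinit : G.init ∈ Wset G δ) : IsTrap1 G (Wset G δ) (f1wit G δ hG) :=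
  fun f2 hf2 => infSet_subset (f1wit_stays hG hf2 hinit)

lemma f1wit_fair [Fintype V] {G : GameGraph V} {δ : Finset (Set V)} (hG : G.WellFormed) :
    ∀ f2, G.IsStrategy2 f2 → ∀ v ∈ G.V1,
      v ∈ infSet (G.outcome (f1wit G δ hG) f2) →
      gFair G δ hG v ⊆ infSet (G.outcome (f1wit G δ hG) f2) := by
  intro f2 hf2 v hv1 hvI u hu
  set ρ := G.outcome (f1wit G δ hG) f2 with hρ
  set len := (lst G δ hG v).length with hlendef
  have hlen : 0 < len := lst_pos hv1
  obtain ⟨r, hr, hru⟩ := List.mem_iff_getElem.1 (mem_lst.2 hu)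
  intro n
  -- find a position `p ≥ n` where `v` is visited for the `k`-th time, `k ≡ r [MOD len]`
  set k := r + len * (cnt ρ v n + 1) with hkdef
  have hkc : cnt ρ v n < k := by
    have : cnt ρ v n + 1 ≤ len * (cnt ρ v n + 1) := Nat.le_mul_of_pos_left _ hlen
    omega
  have hP : ∃ p, k + 1 ≤ cnt ρ v (p + 1) := by
    obtain ⟨p₀, hp₀⟩ := cnt_unbounded hvI (k + 1)
    exact ⟨p₀, le_trans hp₀ (cnt_mono ρ v (Nat.le_succ _))⟩
  set p := Nat.find hP with hpdef
  have hp1 : k + 1 ≤ cnt ρ v (p + 1) := Nat.find_spec hP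
  have hp2 : cnt ρ v p ≤ k := by
    rcases Nat.eq_zero_or_pos p with hp0 | hp0
    · rw [hp0, cnt_zero]; omega
    · have := Nat.find_min hP (show p - 1 < p by omega)
      rw [show p - 1 + 1 = p by omega] at this
      omega
  have hstep := cnt_succ ρ v p
  have hρp : ρ p = v := by
    by_contra hne
    rw [if_neg hne] at hstep
    omega
  have hcp : cnt ρ v p = k := by
    rw [if_pos hρp] at hstep
    omega
  have hpn : n ≤ p := by
    by_contra hc
    have := cnt_mono ρ v (show p ≤ n by omega)
    omega
  refine ⟨p + 1, by omega, ?_⟩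
  have : ρ (p + 1) = f1wit G δ hG (G.run (f1wit G δ hG) f2 G.init p).1 (ρ p) := by
    rw [hρ]
    show G.outcomeFrom (f1wit G δ hG) f2 G.init (p+1) = _
    rw [outcomeFrom_succ, if_pos (by rw [show G.outcomeFrom (f1wit G δ hG) f2 G.init p = v from hρp]; exact hv1)]
    rfl
  rw [this, hρp, f1wit]
  have hhist : (G.run (f1wit G δ hG) f2 G.init p).1 = (List.range p).map ρ :=
    run_fst G _ f2 G.init p
  have hcnteq : hcnt (G.run (f1wit G δ hG) f2 G.init p).1 v = k := by
    rw [hhist]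
    exact hcp
  rw [hcnteq, ← hlendef]
  have hmod : k % len = r := by
    rw [hkdef, Nat.add_mul_mod_self_left, Nat.mod_eq_of_lt hr]
  rw [hmod, List.getD_eq_getElem _ _ (by omega : r < (lst G δ hG v).length)]
  exact hru

/-- Condition (ii): any trap-and-fair strategy is winning. -/
lemma main_ii [Fintype V] {G : GameGraph V} (hG : G.WellFormed) (δ : Finset (Set V))
    {f1 : Strat V} (h1 : G.IsStrategy1 f1) (ht : IsTrap1 G (Wset G δ) f1)
    (hr : Respects1 G (gFair G δ hG) f1) {f2 : Strat V} (hf2 : G.IsStrategy2 f2)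
    {α : Set V} (hα : α ∈ δ) : SatObj ObjKind.buchi (G.outcome f1 f2) α := by
  classical
  set ρ := G.outcome f1 f2 with hρ
  have hLW : infSet ρ ⊆ Wset G δ := ht f2 hf2
  obtain ⟨N, hN⟩ := eventually_infSet ρ
  obtain ⟨vm, hvL, hmin⟩ := Set.exists_min_image (infSet ρ) (rk G δ α)
    (Set.toFinite _) (infSet_nonempty ρ)
  show (infSet ρ ∩ α).Nonempty
  by_contra hno
  rw [Set.not_nonempty_iff_eq_empty] at hno
  have hdis : ∀ u ∈ infSet ρ, u ∉ α := fun u hu ha =>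
    (Set.eq_empty_iff_forall_notMem.1 hno u) ⟨hu, ha⟩
  rcases mem_V1_or_V2 hG vm with h1' | h2'
  · obtain ⟨u, hug, hulti⟩ := exists_decreasing hG hα h1' (hLW hvL) (hdis vm hvL)
    have huL : u ∈ infSet ρ := hr.2 f2 hf2 vm h1' hvL hug
    exact absurd (hmin u huL) (by omega)
  · have hvX : vm ∈ attrX G δ α := Wset_subset_attrX hG hα (hLW hvL)
    have hvn := mem_attr_rk G δ α hvX
    rcases hn : rk G δ α vm with _ | m
    · rw [hn] at hvn
      exact hdis vm hvL hvn.1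
    · rw [hn] at hvn
      rcases hvn with (hv | hv) | hv
      · have := rk_le_of_mem G δ α hv
        omega
      · exact absurd hv.1 (not_mem_V1 hG h2')
      · obtain ⟨_, _, hall⟩ := hv
        obtain ⟨p, hpN, hρp⟩ := hvL N
        have huL : ρ (p + 1) ∈ infSet ρ := hN (p + 1) (by omega)
        have hnext : ρ (p + 1) = f2 (G.run f1 f2 G.init p).1 (ρ p) := by
          rw [hρ]
          show G.outcomeFrom f1 f2 G.init (p+1) = _
          rw [outcomeFrom_succ, if_neg (by rw [show G.outcomeFrom f1 f2 G.init p = vm from hρp]; exact not_mem_V1 hG h2')]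
          rfl
        have hE : G.E vm (ρ (p + 1)) := by
          rw [hnext, hρp]
          exact hf2 _ _ h2'
        have := rk_le_of_mem G δ α (hall _ hE)
        have := hmin _ huL
        omega

end Stmt14Aux
/-- Player 1 wins the AllB game (G, δ) iff there are U ⊆ V and a
fairness requirement g such that a U-trap strategy respecting g exists, and every
U-trap strategy respecting g is winning in (G, δ). -/
theorem stmt14 {V : Type u} [Fintype V] (G : GameGraph V) (hG : G.WellFormed)
    (δ : Finset (Set V)) :
    P1WinsAllB G δ ↔
      ∃ (U : Set V) (g : V → Set V), FairnessReq1 G g ∧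
        (∃ f1, G.IsStrategy1 f1 ∧ IsTrap1 G U f1 ∧ Respects1 G g f1) ∧
        (∀ f1, G.IsStrategy1 f1 → IsTrap1 G U f1 → Respects1 G g f1 →
          ∀ f2, G.IsStrategy2 f2 → ∀ α ∈ δ,
            SatObj ObjKind.buchi (G.outcome f1 f2) α) := by
  open Stmt14Aux in
  constructor
  · rintro ⟨f1₀, hf1₀, hw₀⟩
    have hinit : G.init ∈ Wset G δ := ⟨f1₀, hf1₀, hw₀⟩
    refine ⟨Wset G δ, gFair G δ hG, gFair_fairness hG,
      ⟨f1wit G δ hG, f1wit_strat hG, f1wit_trap hG hinit,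
        fun h v hv => f1wit_mem hG h hv, f1wit_fair hG⟩, ?_⟩
    intro f1 h1 ht hr f2 hf2 α hα
    exact main_ii hG δ h1 ht hr hf2 hα
  · rintro ⟨U, g, _, ⟨f1, h1, ht, hr⟩, hall⟩
    exact ⟨f1, h1, hall f1 h1 ht hr⟩
end

section
/- Let γ ∈ {Büchi, co-Büchi} and let (G, k, β) be a γ-coverage game. A Player-2 strategy f₂ is a disrupting strategy in (G, k, β) if and only if the family {β ∖ δ : δ ∈ Δ_{f₂}} is k-wise intersecting. -/
open scoped Classical

universe u

variable {V : Type u}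

/-- `sat(ρ, β)`: the set of objectives of `β` satisfied by the play `ρ`. -/
def satPlays (γ : ObjKind) (ρ : ℕ → V) (β : Finset (Set V)) : Set (Set V) :=
  {α | α ∈ β ∧ SatObj γ ρ α}

/-- `Δ_{f₂}`: the set of maximal elements, under set inclusion, of the family
`{sat(outcome(f₁, f₂), β) : f₁ a Player-1 strategy}`. -/
def DeltaFam (G : GameGraph V) (γ : ObjKind) (β : Finset (Set V)) (f2 : Strat V) :
    Set (Set (Set V)) :=
  {δ | (∃ f1, G.IsStrategy1 f1 ∧ satPlays γ (G.outcome f1 f2) β = δ) ∧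
    ∀ f1, G.IsStrategy1 f1 → δ ⊆ satPlays γ (G.outcome f1 f2) β →
      satPlays γ (G.outcome f1 f2) β = δ}

/-- A family Δ of sets is k-wise intersecting: the intersection of every k members
(repetitions allowed) is nonempty. -/
def kWiseIntersecting (k : ℕ) (Δ : Set (Set (Set V))) : Prop :=
  ∀ ds : Fin k → Set (Set V), (∀ i, ds i ∈ Δ) → (⋂ i, ds i).Nonempty

/-- Every achieved satisfaction set extends to a maximal one in `Δ_{f₂}`. -/
lemma exists_mem_DeltaFam {V : Type u} [Fintype V] (γ : ObjKind) (G : GameGraph V)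
    (β : Finset (Set V)) (f2 f1 : Strat V) (hf1 : G.IsStrategy1 f1) :
    ∃ δ ∈ DeltaFam G γ β f2, satPlays γ (G.outcome f1 f2) β ⊆ δ := by
  set T : Set (Set (Set V)) :=
    {x | ∃ g, G.IsStrategy1 g ∧ satPlays γ (G.outcome g f2) β = x ∧
      satPlays γ (G.outcome f1 f2) β ⊆ x} with hT
  have hfin : T.Finite := Set.toFinite T
  have hne : T.Nonempty := ⟨satPlays γ (G.outcome f1 f2) β, f1, hf1, rfl, subset_rfl⟩
  obtain ⟨δ, hδT, hmax⟩ := hfin.exists_maximalFor id T hne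
  obtain ⟨g, hg, hgδ, hsub⟩ := hδT
  refine ⟨δ, ⟨⟨g, hg, hgδ⟩, ?_⟩, hsub⟩
  intro g' hg' hδg'
  have : satPlays γ (G.outcome g' f2) β ∈ T :=
    ⟨g', hg', rfl, hsub.trans hδg'⟩
  exact Set.Subset.antisymm (hmax this hδg') hδg'

/-- a Player-2 strategy f₂ is disrupting in (G, k, β) iff the family
{β ∖ δ : δ ∈ Δ_{f₂}} is k-wise intersecting. -/
theorem stmt15 {V : Type u} [Fintype V] (γ : ObjKind) (G : GameGraph V)
    (hG : G.WellFormed) (k : ℕ) (hk : 1 ≤ k) (β : Finset (Set V))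
    (f2 : Strat V) (hf2 : G.IsStrategy2 f2) :
    IsDisrupting G γ k β f2 ↔
      kWiseIntersecting k
        {x | ∃ δ ∈ DeltaFam G γ β f2, x = (β : Set (Set V)) \ δ} := by
  constructor
  · intro hdis ds hds
    choose δ hδ hxeq using hds
    have hF : ∀ i, ∃ f1, G.IsStrategy1 f1 ∧ satPlays γ (G.outcome f1 f2) β = δ i :=
      fun i => (hδ i).1
    choose F hF1 hFδ using hF
    obtain ⟨α, hαβ, hα⟩ := hdis F hF1
    refine ⟨α, Set.mem_iInter.2 fun i => ?_⟩
    rw [hxeq i]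
    refine ⟨hαβ, fun hmem => ?_⟩
    rw [← hFδ i] at hmem
    exact hα i hmem.2
  · intro hkw F hF1
    have hmax : ∀ i, ∃ δ ∈ DeltaFam G γ β f2, satPlays γ (G.outcome (F i) f2) β ⊆ δ :=
      fun i => exists_mem_DeltaFam γ G β f2 (F i) (hF1 i)
    choose δ hδ hsub using hmax
    obtain ⟨α, hα⟩ := hkw (fun i => (β : Set (Set V)) \ δ i) (fun i => ⟨δ i, hδ i, rfl⟩)
    have hα' : ∀ i, α ∈ (β : Set (Set V)) \ δ i := fun i => Set.mem_iInter.1 hα i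
    refine ⟨α, (hα' ⟨0, hk⟩).1, fun i hsat => ?_⟩
    exact (hα' i).2 (hsub i ⟨(hα' i).1, hsat⟩)
end

section
/- Let (G, k, β) be a co-Büchi coverage game. If Disruptor has a disrupting strategy in (G, k, β), then there exist a set of vertices U ⊆ V and a fairness requirement g for Player 2 such that: (i) there exists a Player-2 strategy that is a U-trap and respects g; and (ii) every Player-2 strategy that is a U-trap and respects g is a disrupting strategy in (G, k, β). -/
open scoped Classical

universe u

variable {V : Type u}

/-- A Player-2 strategy is a `U`-trap if all its outcomes eventually stay in `U`. -/
def IsTrap2 (G : GameGraph V) (U : Set V) (f2 : Strat V) : Prop :=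
  ∀ f1, G.IsStrategy1 f1 → infSet (G.outcome f1 f2) ⊆ U

/-- `g` is a fairness requirement for Player 2: it maps each Player-2 vertex to a
nonempty set of its `E`-successors. -/
def FairnessReq2 (G : GameGraph V) (g : V → Set V) : Prop :=
  ∀ v ∈ G.V2, (g v).Nonempty ∧ ∀ u ∈ g v, G.E v u

/-- A Player-2 strategy respects the fairness requirement `g`. -/
def Respects2 (G : GameGraph V) (g : V → Set V) (f2 : Strat V) : Prop :=
  (∀ (h : List V) (v : V), v ∈ G.V2 → f2 h v ∈ g v) ∧
  ∀ f1, G.IsStrategy1 f1 → ∀ v ∈ G.V2, v ∈ infSet (G.outcome f1 f2) →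
    g v ⊆ infSet (G.outcome f1 f2)


section Stmt16Aux

variable {V : Type u}

lemma infSet_nonempty [Fintype V] (ρ : ℕ → V) : (infSet ρ).Nonempty := by
  obtain ⟨v, hv⟩ := Finite.exists_infinite_fiber ρ
  refine ⟨v, fun n => ?_⟩
  have hv' : (ρ ⁻¹' {v}).Infinite := Set.infinite_coe_iff.mp hv
  obtain ⟨m, hm, hlt⟩ := hv'.exists_gt n
  exact ⟨m, hlt.le, hm⟩

lemma eventually_mem_infSet [Fintype V] (ρ : ℕ → V) :
    ∃ N, ∀ n, N ≤ n → ρ n ∈ infSet ρ := by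
  have h : ∀ v : V, ∃ N, v ∉ infSet ρ → ∀ m, N ≤ m → ρ m ≠ v := by
    intro v
    by_cases hv : v ∈ infSet ρ
    · exact ⟨0, fun h => absurd hv h⟩
    · simp only [infSet, Set.mem_setOf_eq] at hv
      push_neg at hv
      obtain ⟨n, hn⟩ := hv
      exact ⟨n, fun _ m hm heq => hn m hm heq⟩
  choose N hN using h
  refine ⟨Finset.univ.sup N, fun n hn => ?_⟩
  by_contra hmem
  exact hN (ρ n) hmem n (le_trans (Finset.le_sup (Finset.mem_univ _)) hn) rfl


noncomputable def cnt (l : List V) (v : V) : ℕ := l.countP (fun w => decide (w = v))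

lemma cnt_nil (v : V) : cnt ([] : List V) v = 0 := rfl

lemma cnt_append_singleton (l : List V) (x v : V) :
    cnt (l ++ [x]) v = cnt l v + if x = v then 1 else 0 := by
  simp [cnt, List.countP_append, List.countP_cons]

lemma cnt_const_of_no_occ (ρ : ℕ → V) (c : ℕ → ℕ) (v : V)
    (hc : ∀ n, c (n+1) = c n + if ρ n = v then 1 else 0)
    (a b : ℕ) (hab : a ≤ b) (hno : ∀ m, a ≤ m → m < b → ρ m ≠ v) :
    c b = c a := by
  induction b, hab using Nat.le_induction with
  | base => rfl
  | succ b hab ih =>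
    rw [hc b, if_neg (hno b hab (Nat.lt_succ_self b)),
      ih (fun m hm hmb => hno m hm (hmb.trans (Nat.lt_succ_self b)))]
    omega

lemma visits_exists (ρ : ℕ → V) (c : ℕ → ℕ) (v : V)
    (hc : ∀ n, c (n+1) = c n + if ρ n = v then 1 else 0) (hc0 : c 0 = 0)
    (hinf : v ∈ infSet ρ) :
    ∀ j, ∃ t, j ≤ t ∧ ρ t = v ∧ c t = j := by
  intro j
  induction j with
  | zero =>
    have hex : ∃ t, ρ t = v := by
      obtain ⟨m, _, hm⟩ := hinf 0; exact ⟨m, hm⟩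
    refine ⟨Nat.find hex, Nat.zero_le _, Nat.find_spec hex, ?_⟩
    rw [cnt_const_of_no_occ ρ c v hc 0 (Nat.find hex) (Nat.zero_le _)
      (fun m _ hm => Nat.find_min hex hm), hc0]
  | succ j ih =>
    obtain ⟨t, hjt, htv, hct⟩ := ih
    have hex : ∃ m, t < m ∧ ρ m = v := by
      obtain ⟨m, hm, hmv⟩ := hinf (t+1); exact ⟨m, hm, hmv⟩
    set t' := Nat.find hex with ht'def
    obtain ⟨htt', ht'v⟩ := Nat.find_spec hex
    refine ⟨t', by omega, ht'v, ?_⟩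
    have h1 : c (t+1) = c t + 1 := by rw [hc t, if_pos htv]
    have h2 : c t' = c (t+1) := by
      refine cnt_const_of_no_occ ρ c v hc (t+1) t' htt' (fun m hm hmt' => ?_)
      intro heq
      exact Nat.find_min hex hmt' ⟨by omega, heq⟩
    omega


namespace GameGraph

-- AUX
lemma run_succ_fst (G : GameGraph V) (f1 f2 : Strat V) (v : V) (n : ℕ) :
    (G.run f1 f2 v (n+1)).1 = (G.run f1 f2 v n).1 ++ [(G.run f1 f2 v n).2] := rfl

lemma run_succ_snd (G : GameGraph V) (f1 f2 : Strat V) (v : V) (n : ℕ) :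
    (G.run f1 f2 v (n+1)).2 =
      if (G.run f1 f2 v n).2 ∈ G.V1 then f1 (G.run f1 f2 v n).1 (G.run f1 f2 v n).2
      else f2 (G.run f1 f2 v n).1 (G.run f1 f2 v n).2 := rfl

lemma run_fst_length (G : GameGraph V) (f1 f2 : Strat V) (v : V) (n : ℕ) :
    (G.run f1 f2 v n).1.length = n := by
  induction n with
  | zero => rfl
  | succ n ih => simp [run_succ_fst, ih]

lemma run_congr (G : GameGraph V) (f1 f1' f2 : Strat V) (v : V) (n : ℕ)
    (hagree : ∀ (h : List V) (w : V), h.length < n → f1 h w = f1' h w) :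
    G.run f1 f2 v n = G.run f1' f2 v n := by
  induction n with
  | zero => rfl
  | succ n ih =>
    have ih' := ih (fun h w hl => hagree h w (hl.trans (Nat.lt_succ_self n)))
    have hlen : (G.run f1' f2 v n).1.length < n + 1 := by
      rw [run_fst_length]; exact Nat.lt_succ_self n
    rw [run, run, ← ih']
    by_cases hv : (G.run f1 f2 v n).2 ∈ G.V1
    · simp only [if_pos hv]
      rw [hagree _ _ (by rw [run_fst_length]; exact Nat.lt_succ_self n)]
    · simp only [if_neg hv]




/-- Pairs (history, vertex) realizable in some play against `f2s`. -/
def TP (G : GameGraph V) (f2s : Strat V) (h : List V) (v : V) : Prop :=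
  ∃ f1, G.IsStrategy1 f1 ∧ ∃ n, G.run f1 f2s G.init n = (h, v)

/-- Vertices reachable in some play against `f2s`. -/
def reachSet (G : GameGraph V) (f2s : Strat V) : Set V :=
  { v | ∃ h, G.TP f2s h v }

/-- The fairness requirement induced by `f2s`. -/
noncomputable def fairReq (G : GameGraph V) (f2s : Strat V) : V → Set V :=
  fun v => if v ∈ G.reachSet f2s then { u | ∃ h, G.TP f2s h v ∧ f2s h v = u }
    else {f2s [] v}

noncomputable def dflt (G : GameGraph V) (hG : G.WellFormed) : V → V :=
  fun v => (hG.2.2 v).choose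

lemma dflt_spec (G : GameGraph V) (hG : G.WellFormed) (v : V) : G.E v (G.dflt hG v) :=
  (hG.2.2 v).choose_spec

lemma dflt_strategy1 (G : GameGraph V) (hG : G.WellFormed) :
    G.IsStrategy1 (fun _ v => G.dflt hG v) := fun _ v _ => G.dflt_spec hG v

lemma init_mem_reachSet (G : GameGraph V) (hG : G.WellFormed) (f2s : Strat V) :
    G.init ∈ G.reachSet f2s :=
  ⟨[], fun _ v => G.dflt hG v, G.dflt_strategy1 hG, 0, rfl⟩

lemma TP_extend_V1 (G : GameGraph V) (f2s : Strat V) {h : List V} {v u : V}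
    (htp : G.TP f2s h v) (hv : v ∈ G.V1) (hE : G.E v u) :
    G.TP f2s (h ++ [v]) u := by
  obtain ⟨f1, hf1, n, hrun⟩ := htp
  have hfst : (G.run f1 f2s G.init n).1 = h := by rw [hrun]
  have hlen : h.length = n := by rw [← hfst, run_fst_length]
  set f1' : Strat V := fun h' w => if h' = h ∧ w = v then u else f1 h' w with hf1'def
  have hstrat : G.IsStrategy1 f1' := by
    intro h' w hw
    by_cases hcond : h' = h ∧ w = v
    · simp only [hf1'def, if_pos hcond]
      rw [hcond.2]; exact hE
    · simp only [hf1'def, if_neg hcond]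
      exact hf1 h' w hw
  have hagree : ∀ (h' : List V) (w : V), h'.length < n → f1' h' w = f1 h' w := by
    intro h' w hl
    have : ¬(h' = h ∧ w = v) := by
      rintro ⟨rfl, -⟩; omega
    simp only [hf1'def, if_neg this]
  have hrun' : G.run f1' f2s G.init n = (h, v) := by
    rw [G.run_congr f1' f1 f2s G.init n hagree, hrun]
  refine ⟨f1', hstrat, n + 1, ?_⟩
  rw [run, hrun']
  simp only [if_pos hv, hf1'def, if_pos (And.intro rfl rfl)]

lemma TP_extend_V2 (G : GameGraph V) (f2s : Strat V) {h : List V} {v : V}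
    (htp : G.TP f2s h v) (hv : v ∉ G.V1) :
    G.TP f2s (h ++ [v]) (f2s h v) := by
  obtain ⟨f1, hf1, n, hrun⟩ := htp
  refine ⟨f1, hf1, n + 1, ?_⟩
  rw [run, hrun]
  simp [if_neg hv]


lemma TP_mem_reachSet (G : GameGraph V) (f2s : Strat V) {h : List V} {v : V}
    (htp : G.TP f2s h v) : v ∈ G.reachSet f2s := ⟨h, htp⟩

lemma fair_mem (G : GameGraph V) (f2s : Strat V) {h : List V} {v : V}
    (htp : G.TP f2s h v) : f2s h v ∈ G.fairReq f2s v := by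
  rw [fairReq, if_pos (G.TP_mem_reachSet f2s htp)]
  exact ⟨h, htp, rfl⟩

lemma fairReq_nonempty (G : GameGraph V) (f2s : Strat V) (v : V) :
    (G.fairReq f2s v).Nonempty := by
  rw [fairReq]
  split
  · next hreach => obtain ⟨h, htp⟩ := hreach; exact ⟨f2s h v, h, htp, rfl⟩
  · exact ⟨f2s [] v, rfl⟩

lemma fairReq_E (G : GameGraph V) (f2s : Strat V) (hs2 : G.IsStrategy2 f2s)
    {v : V} (hv : v ∈ G.V2) : ∀ u ∈ G.fairReq f2s v, G.E v u := by
  intro u hu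
  rw [fairReq] at hu
  split at hu
  · obtain ⟨h, _, rfl⟩ := hu; exact hs2 h v hv
  · rw [Set.mem_singleton_iff] at hu; rw [hu]; exact hs2 [] v hv

lemma fairnessReq_fairReq (G : GameGraph V) (f2s : Strat V) (hs2 : G.IsStrategy2 f2s) :
    ∀ v ∈ G.V2, (G.fairReq f2s v).Nonempty ∧ ∀ u ∈ G.fairReq f2s v, G.E v u :=
  fun v hv => ⟨G.fairReq_nonempty f2s v, G.fairReq_E f2s hs2 hv⟩

lemma fairReq_sub_reach (G : GameGraph V) (f2s : Strat V) {v : V}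
    (hreach : v ∈ G.reachSet f2s) (hv : v ∉ G.V1) :
    G.fairReq f2s v ⊆ G.reachSet f2s := by
  intro u hu
  rw [fairReq, if_pos hreach] at hu
  obtain ⟨h, htp, rfl⟩ := hu
  exact G.TP_mem_reachSet f2s (G.TP_extend_V2 f2s htp hv)

/-- The list of elements of `fairReq`. -/
noncomputable def rotList [Fintype V] (G : GameGraph V) (f2s : Strat V) (v : V) : List V :=
  ((G.fairReq f2s v).toFinite.toFinset).toList

lemma mem_rotList [Fintype V] (G : GameGraph V) (f2s : Strat V) (v u : V) :
    u ∈ G.rotList f2s v ↔ u ∈ G.fairReq f2s v := by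
  rw [rotList, Finset.mem_toList, Set.Finite.mem_toFinset]

lemma rotList_pos [Fintype V] (G : GameGraph V) (f2s : Strat V) (v : V) :
    0 < (G.rotList f2s v).length := by
  obtain ⟨u, hu⟩ := G.fairReq_nonempty f2s v
  exact List.length_pos_iff.mpr (fun hemp => by
    rw [← mem_rotList G f2s v u] at hu; rw [hemp] at hu; exact (List.not_mem_nil (a := u)) hu)

/-- The rotation strategy: at each visit to `v`, plays the next element of
`fairReq v` in round-robin order (indexed by the number of past visits). -/
noncomputable def f2d [Fintype V] (G : GameGraph V) (f2s : Strat V) : Strat V :=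
  fun h v => (G.rotList f2s v).get
    ⟨cnt h v % (G.rotList f2s v).length, Nat.mod_lt _ (G.rotList_pos f2s v)⟩

lemma f2d_mem [Fintype V] (G : GameGraph V) (f2s : Strat V) (h : List V) (v : V) :
    G.f2d f2s h v ∈ G.fairReq f2s v := by
  rw [← mem_rotList]; exact List.get_mem _ _

lemma f2d_strategy2 [Fintype V] (G : GameGraph V) (f2s : Strat V) (hs2 : G.IsStrategy2 f2s) :
    G.IsStrategy2 (G.f2d f2s) :=
  fun h v hv => G.fairReq_E f2s hs2 hv _ (G.f2d_mem f2s h v)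


lemma outcome_succ_V1 (G : GameGraph V) (f1 f2 : Strat V) (n : ℕ)
    (hv : G.outcome f1 f2 n ∈ G.V1) :
    G.outcome f1 f2 (n+1) = f1 (G.run f1 f2 G.init n).1 (G.outcome f1 f2 n) := by
  show (G.run f1 f2 G.init (n+1)).2 = _
  rw [run_succ_snd]
  exact if_pos hv

lemma outcome_succ_V2 (G : GameGraph V) (f1 f2 : Strat V) (n : ℕ)
    (hv : G.outcome f1 f2 n ∉ G.V1) :
    G.outcome f1 f2 (n+1) = f2 (G.run f1 f2 G.init n).1 (G.outcome f1 f2 n) := by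
  show (G.run f1 f2 G.init (n+1)).2 = _
  rw [run_succ_snd]
  exact if_neg hv

lemma outcome_run_eta (G : GameGraph V) (f1 f2 : Strat V) (n : ℕ) :
    G.run f1 f2 G.init n = ((G.run f1 f2 G.init n).1, G.outcome f1 f2 n) := rfl

lemma f2d_stays [Fintype V] (G : GameGraph V) (hG : G.WellFormed) (f2s : Strat V)
    (f1 : Strat V) (h1 : G.IsStrategy1 f1) :
    ∀ n, G.outcome f1 (G.f2d f2s) n ∈ G.reachSet f2s := by
  intro n
  induction n with
  | zero => exact G.init_mem_reachSet hG f2s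
  | succ n ih =>
    by_cases hv : G.outcome f1 (G.f2d f2s) n ∈ G.V1
    · rw [G.outcome_succ_V1 _ _ _ hv]
      obtain ⟨h, htp⟩ := ih
      exact G.TP_mem_reachSet f2s (G.TP_extend_V1 f2s htp hv (h1 _ _ hv))
    · rw [G.outcome_succ_V2 _ _ _ hv]
      exact G.fairReq_sub_reach f2s ih hv (G.f2d_mem f2s _ _)

lemma f2d_trap [Fintype V] (G : GameGraph V) (hG : G.WellFormed) (f2s : Strat V)
    (f1 : Strat V) (h1 : G.IsStrategy1 f1) :
    infSet (G.outcome f1 (G.f2d f2s)) ⊆ G.reachSet f2s := by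
  intro u hu
  obtain ⟨m, _, heq⟩ := hu 0
  exact heq ▸ G.f2d_stays hG f2s f1 h1 m

lemma f2d_fair [Fintype V] (G : GameGraph V) (hG : G.WellFormed) (f2s : Strat V)
    (f1 : Strat V) (h1 : G.IsStrategy1 f1) (v : V) (hv2 : v ∈ G.V2)
    (hvinf : v ∈ infSet (G.outcome f1 (G.f2d f2s))) :
    G.fairReq f2s v ⊆ infSet (G.outcome f1 (G.f2d f2s)) := by
  intro u hu
  set ρ := G.outcome f1 (G.f2d f2s) with hρ
  set c : ℕ → ℕ := fun n => cnt (G.run f1 (G.f2d f2s) G.init n).1 v with hcdef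
  have hc : ∀ n, c (n+1) = c n + if ρ n = v then 1 else 0 := by
    intro n
    show cnt ((G.run f1 (G.f2d f2s) G.init n).1 ++ [(G.run f1 (G.f2d f2s) G.init n).2]) v = _
    rw [cnt_append_singleton]
    rfl
  have hc0 : c 0 = 0 := rfl
  have hu' : u ∈ G.rotList f2s v := (G.mem_rotList f2s v u).mpr hu
  obtain ⟨⟨i, hi⟩, hgot⟩ := List.mem_iff_get.mp hu'
  intro n
  set len := (G.rotList f2s v).length with hlen
  have hlenpos : 0 < len := G.rotList_pos f2s v
  obtain ⟨t, hjt, htv, hct⟩ := visits_exists ρ c v hc hc0 hvinf (i + len * (n+1))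
  have hmul : n + 1 ≤ len * (n+1) := Nat.le_mul_of_pos_left _ hlenpos
  refine ⟨t + 1, by omega, ?_⟩
  have hnotV1 : ρ t ∉ G.V1 := fun hmem => Set.disjoint_left.mp hG.1 hmem (htv ▸ hv2)
  rw [hρ, G.outcome_succ_V2 _ _ _ hnotV1]
  have hidx : c t % len = i := by
    rw [hct, Nat.add_mul_mod_self_left, Nat.mod_eq_of_lt hi]
  show G.f2d f2s (G.run f1 (G.f2d f2s) G.init t).1 (G.outcome f1 (G.f2d f2s) t) = u
  have houtv : G.outcome f1 (G.f2d f2s) t = v := htv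
  rw [houtv]
  show (G.rotList f2s v).get ⟨c t % len, _⟩ = u
  have hfin : (⟨c t % len, Nat.mod_lt _ hlenpos⟩ : Fin len) = ⟨i, hi⟩ := Fin.ext hidx
  rw [hfin]
  exact hgot

lemma confine (G : GameGraph V) (hG : G.WellFormed) (f2s : Strat V) (I : Set V)
    (hw : ∃ w ∈ I, w ∈ G.reachSet f2s)
    (hlive : ∀ v ∈ I, v ∈ G.V1 → ∃ u, u ∈ I ∧ G.E v u)
    (hclosed : ∀ v ∈ I, v ∉ G.V1 → ∀ h, G.TP f2s h v → f2s h v ∈ I) :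
    ∃ f1', G.IsStrategy1 f1' ∧ infSet (G.outcome f1' f2s) ⊆ I := by
  obtain ⟨w, hwI, h0, f1w, hf1w, n₀, hrun⟩ := hw
  set stay : V → V := fun v => if H : ∃ u, u ∈ I ∧ G.E v u then H.choose else G.dflt hG v
    with hstaydef
  have stay_eq : ∀ v, stay v = if H : ∃ u, u ∈ I ∧ G.E v u then H.choose
      else G.dflt hG v := fun _ => rfl
  have stay_E : ∀ v, G.E v (stay v) := by
    intro v
    rw [stay_eq]
    split
    · next H => exact H.choose_spec.2
    · exact G.dflt_spec hG v
  have stay_I : ∀ v ∈ I, v ∈ G.V1 → stay v ∈ I := by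
    intro v hv hv1
    have H := hlive v hv hv1
    rw [stay_eq, dif_pos H]
    exact H.choose_spec.1
  set f1' : Strat V := fun h v => if h.length < n₀ then f1w h v else stay v with hf1'def
  have f1'_eq : ∀ (h : List V) (v : V), f1' h v = if h.length < n₀ then f1w h v
      else stay v := fun _ _ => rfl
  have hstrat : G.IsStrategy1 f1' := by
    intro h v hv
    rw [f1'_eq]
    split
    · exact hf1w h v hv
    · exact stay_E v
  have hagree : ∀ m, m ≤ n₀ → G.run f1' f2s G.init m = G.run f1w f2s G.init m := by
    intro m hm
    refine G.run_congr f1' f1w f2s G.init m (fun h x hl => ?_)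
    rw [f1'_eq, if_pos (lt_of_lt_of_le hl hm)]
  have hbase : G.outcome f1' f2s n₀ = w := by
    show (G.run f1' f2s G.init n₀).2 = w
    rw [hagree n₀ le_rfl, hrun]
  have hB : ∀ m, n₀ ≤ m → G.outcome f1' f2s m ∈ I := by
    intro m hm
    induction m, hm using Nat.le_induction with
    | base => rw [hbase]; exact hwI
    | succ m hm ih =>
      by_cases hv : G.outcome f1' f2s m ∈ G.V1
      · rw [G.outcome_succ_V1 _ _ _ hv]
        have hl : ¬((G.run f1' f2s G.init m).1.length < n₀) := by
          rw [run_fst_length]; omega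
        rw [f1'_eq, if_neg hl]
        exact stay_I _ ih hv
      · rw [G.outcome_succ_V2 _ _ _ hv]
        exact hclosed _ ih hv _ ⟨f1', hstrat, m, G.outcome_run_eta f1' f2s m⟩
  refine ⟨f1', hstrat, ?_⟩
  intro u hu
  obtain ⟨m, hm, heq⟩ := hu n₀
  exact heq ▸ hB m hm


end GameGraph

end Stmt16Aux

/-- if Disruptor has a disrupting strategy in a co-Büchi coverage game
(G, k, β), then there are U ⊆ V and a fairness requirement g for Player 2 such that a
U-trap Player-2 strategy respecting g exists, and every such strategy is disrupting. -/
theorem stmt16 {V : Type u} [Fintype V] (G : GameGraph V) (hG : G.WellFormed)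
    (k : ℕ) (hk : 1 ≤ k) (β : Finset (Set V))
    (hdis : DisruptorWins G ObjKind.cobuchi k β) :
    ∃ (U : Set V) (g : V → Set V), FairnessReq2 G g ∧
      (∃ f2, G.IsStrategy2 f2 ∧ IsTrap2 G U f2 ∧ Respects2 G g f2) ∧
      (∀ f2, G.IsStrategy2 f2 → IsTrap2 G U f2 → Respects2 G g f2 →
        IsDisrupting G ObjKind.cobuchi k β f2) := by
  obtain ⟨f2s, hs2, hds⟩ := hdis
  refine ⟨G.reachSet f2s, G.fairReq f2s, G.fairnessReq_fairReq f2s hs2,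
    ⟨G.f2d f2s, G.f2d_strategy2 f2s hs2, fun f1 h1 => G.f2d_trap hG f2s f1 h1,
      fun h v _ => G.f2d_mem f2s h v,
      fun f1 h1 v hv2 hvinf => G.f2d_fair hG f2s f1 h1 v hv2 hvinf⟩, ?_⟩
  intro f2 hf2 htrap hresp
  intro F hF
  have key : ∀ i : Fin k, ∃ f1', G.IsStrategy1 f1' ∧
      infSet (G.outcome f1' f2s) ⊆ infSet (G.outcome (F i) f2) := by
    intro i
    obtain ⟨N, hN⟩ := eventually_mem_infSet (G.outcome (F i) f2)
    refine G.confine hG f2s (infSet (G.outcome (F i) f2)) ?_ ?_ ?_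
    · obtain ⟨w, hw⟩ := infSet_nonempty (G.outcome (F i) f2)
      exact ⟨w, hw, htrap (F i) (hF i) hw⟩
    · intro v hv hv1
      obtain ⟨m, hm, heq⟩ := hv N
      have hv1' : G.outcome (F i) f2 m ∈ G.V1 := by rw [heq]; exact hv1
      refine ⟨G.outcome (F i) f2 (m+1), hN (m+1) (by omega), ?_⟩
      rw [← heq, G.outcome_succ_V1 (F i) f2 m hv1']
      exact hF i _ _ hv1'
    · intro v hv hv1 h htp
      have hv2 : v ∈ G.V2 := by
        have hmem : v ∈ G.V1 ∪ G.V2 := hG.2.1 ▸ Set.mem_univ v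
        rcases hmem with h' | h'
        · exact absurd h' hv1
        · exact h'
      exact hresp.2 (F i) (hF i) v hv2 hv (G.fair_mem f2s htp)
  choose F' hF1 hFsub using key
  obtain ⟨α, hαβ, hα⟩ := hds F' hF1
  refine ⟨α, hαβ, fun i => ?_⟩
  have h1 := hα i
  simp only [SatObj] at h1 ⊢
  intro hemp
  apply h1
  rw [Set.eq_empty_iff_forall_notMem] at hemp ⊢
  intro x hx
  exact hemp x ⟨hFsub i hx.1, hx.2⟩
end

section
/- Let G = (V, E) be a finite directed graph with a total edge relation, let v ∈ V, and let β' be a finite set of Büchi objectives (subsets of V). If there exists an infinite path from v in G that satisfies every Büchi objective in β', then there exists a lasso-shaped infinite path p·q^ω from v in G, of length |p| + |q| at most |V|·(|β'| + 1), that satisfies every Büchi objective in β'. -/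
open scoped Classical

universe u

variable {V : Type u}

def Walk (E : V → V → Prop) (l : List V) (a b : V) : Prop :=
  l.Chain' E ∧ l[0]? = some a ∧ l[l.length - 1]? = some b

lemma Walk.pos {E : V → V → Prop} {l : List V} {a b : V} (h : Walk E l a b) : 0 < l.length := by
  rcases h with ⟨-, h0, -⟩
  by_contra hl
  simp [List.getElem?_eq_none (by omega : l.length ≤ 0)] at h0

lemma chain'_getElem {E : V → V → Prop} {l : List V} (h : l.Chain' E) {i : ℕ}
    (hi : i + 1 < l.length) : E l[i] l[i+1] := by
  have := List.isChain_iff_getElem.mp h i (by omega)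
  simpa [List.get_eq_getElem] using this

lemma walk_segment {E : V → V → Prop} (ρ : ℕ → V) (hρ : ∀ n, E (ρ n) (ρ (n+1)))
    {n m : ℕ} (hnm : n ≤ m) :
    Walk E ((List.range (m + 1 - n)).map (fun k => ρ (n + k))) (ρ n) (ρ m) := by
  refine ⟨?_, ?_, ?_⟩
  · apply List.isChain_iff_getElem.mpr
    intro i hi
    simp only [List.length_map, List.length_range] at hi
    simp only [List.get_eq_getElem, List.getElem_map, List.getElem_range]
    have := hρ (n + i)
    simpa [← Nat.add_assoc] using this
  · simp [List.getElem?_map, List.getElem?_range (by omega : 0 < m + 1 - n)]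
  · simp only [List.length_map, List.length_range]
    rw [List.getElem?_map, List.getElem?_range (by omega : m + 1 - n - 1 < m + 1 - n)]
    simp only [Option.map_some]
    congr 2
    omega

lemma walk_cut {E : V → V → Prop} {l : List V} {a b : V} (h : Walk E l a b)
    (hnd : ¬ l.Nodup) :
    ∃ l', Walk E l' a b ∧ l'.length < l.length := by
  rw [List.nodup_iff_injective_get] at hnd
  simp only [Function.Injective, not_forall] at hnd
  obtain ⟨i0, j0, hij0, hne0⟩ := hnd
  obtain ⟨i, j, hilt, hjlt, hlt, hij⟩ : ∃ (i j : ℕ) (hi : i < l.length)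
      (hj : j < l.length), i < j ∧ l[i]'hi = l[j]'hj := by
    have hne : (i0 : ℕ) ≠ (j0 : ℕ) := by simpa [Fin.ext_iff] using hne0
    simp only [List.get_eq_getElem] at hij0
    rcases lt_or_gt_of_ne hne with h' | h'
    · exact ⟨i0, j0, i0.isLt, j0.isLt, h', hij0⟩
    · exact ⟨j0, i0, j0.isLt, i0.isLt, h', hij0.symm⟩
  obtain ⟨hch, h0, hlast⟩ := h
  have htl : (l.take (i+1)).length = i + 1 := by simp [List.length_take]; omega
  refine ⟨l.take (i + 1) ++ l.drop (j + 1), ⟨?_, ?_, ?_⟩, ?_⟩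
  · refine (hch.take _).append (hch.drop _) ?_
    intro x hx y hy
    rw [List.getLast?_eq_getElem?, htl, Nat.add_sub_cancel, List.getElem?_take,
      if_pos (by omega), List.getElem?_eq_getElem hilt] at hx
    rw [List.head?_eq_getElem?, List.getElem?_drop] at hy
    by_cases hj1 : j + 1 < l.length
    · rw [show j + 1 + 0 = j + 1 from rfl, List.getElem?_eq_getElem hj1] at hy
      cases hx; cases hy
      rw [hij]
      exact chain'_getElem hch hj1
    · rw [List.getElem?_eq_none (by omega : l.length ≤ j + 1 + 0)] at hy
      exact absurd hy (by simp)
  · rw [List.getElem?_append, if_pos (by omega : 0 < (l.take (i+1)).length),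
      List.getElem?_take, if_pos (by omega)]
    exact h0
  · by_cases hj1 : j + 1 < l.length
    · have hlen : (l.take (i+1) ++ l.drop (j+1)).length = (i+1) + (l.length - (j+1)) := by
        simp [List.length_take]; omega
      rw [hlen, List.getElem?_append, if_neg (by rw [htl]; omega), htl,
        show (i+1) + (l.length - (j+1)) - 1 - (i+1) = l.length - (j+1) - 1 by omega,
        List.getElem?_drop, show j + 1 + (l.length - (j+1) - 1) = l.length - 1 by omega]
      exact hlast
    · rw [List.drop_eq_nil_of_le (by omega), List.append_nil, htl, Nat.add_sub_cancel,
        List.getElem?_take, if_pos (by omega), List.getElem?_eq_getElem hilt]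
      rw [show l.length - 1 = j by omega, List.getElem?_eq_getElem hjlt] at hlast
      rw [hij]
      exact hlast
  · simp only [List.length_append, List.length_take, List.length_drop]
    omega

lemma walk_shorten [Fintype V] {E : V → V → Prop} {a b : V} {l : List V}
    (h : Walk E l a b) : ∃ l', Walk E l' a b ∧ l'.length ≤ Fintype.card V := by
  obtain ⟨N, hN⟩ : ∃ N, l.length ≤ N := ⟨l.length, le_rfl⟩
  induction N generalizing l with
  | zero => exact absurd h.pos (by omega)
  | succ N ih =>
    by_cases hnd : l.Nodup
    · exact ⟨l, h, hnd.length_le_card⟩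
    · obtain ⟨l', hl', hlen⟩ := walk_cut h hnd
      exact ih hl' (by omega)

lemma walk_append {E : V → V → Prop} {l₁ l₂ : List V} {a b c : V}
    (h₁ : Walk E l₁ a b) (h₂ : Walk E l₂ b c) :
    Walk E (l₁.dropLast ++ l₂) a c := by
  have h1pos := h₁.pos
  have h2pos := h₂.pos
  obtain ⟨hc1, h10, h1l⟩ := h₁
  obtain ⟨hc2, h20, h2l⟩ := h₂
  have hdl : l₁.dropLast.length = l₁.length - 1 := List.length_dropLast
  refine ⟨?_, ?_, ?_⟩
  · rw [List.dropLast_eq_take]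
    refine (hc1.take _).append hc2 ?_
    intro x hx y hy
    rw [List.getLast?_eq_getElem?, List.length_take, List.getElem?_take] at hx
    rw [List.head?_eq_getElem?] at hy
    by_cases h2 : 2 ≤ l₁.length
    · rw [if_pos (by omega), show min (l₁.length - 1) l₁.length - 1 = l₁.length - 2 by omega,
        List.getElem?_eq_getElem (by omega : l₁.length - 2 < l₁.length)] at hx
      rw [h20] at hy
      cases hx; cases hy
      have h1l' : l₁[l₁.length - 1]'(by omega) = b := by
        rw [List.getElem?_eq_getElem (by omega)] at h1l
        exact Option.some.inj h1l
      rw [← h1l']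
      have := chain'_getElem hc1 (show l₁.length - 2 + 1 < l₁.length by omega)
      convert this using 2
      omega
    · exfalso
      rw [if_neg (by omega)] at hx
      exact absurd hx (by simp)
  · rw [List.getElem?_append]
    by_cases h2 : 2 ≤ l₁.length
    · rw [if_pos (by omega), List.getElem?_dropLast, if_pos (by omega)]
      exact h10
    · rw [if_neg (by omega), show 0 - l₁.dropLast.length = 0 by omega]
      rw [show l₁.length - 1 = 0 by omega] at h1l
      rw [h10] at h1l
      cases h1l
      exact h20
  · rw [List.length_append, hdl, List.getElem?_append,
      if_neg (by omega),
      show l₁.length - 1 + l₂.length - 1 - l₁.dropLast.length = l₂.length - 1 by omega]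
    exact h2l

lemma lasso_of_list {E : V → V → Prop} {L : List V} {v : V} {pl ql : ℕ}
    (hc : L.Chain' E) (hlen : L.length = pl + ql + 1) (hql : 0 < ql)
    (h0 : L[0]? = some v)
    (hper : L[pl + ql]? = L[pl]?) :
    ∃ ρ : ℕ → V, ρ 0 = v ∧ (∀ n, E (ρ n) (ρ (n+1))) ∧
      (∀ n, pl ≤ n → ρ (n + ql) = ρ n) ∧
      (∀ j, pl ≤ j → j < pl + ql → ∀ n, ∃ m, n ≤ m ∧ ρ m = L.getD j v) := by
  set idx : ℕ → ℕ := fun n => if n < pl then n else pl + (n - pl) % ql with hidx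
  have hidxlt : ∀ n, idx n < L.length := by
    intro n
    simp only [hidx]
    split <;> [omega; (have := Nat.mod_lt (n - pl) hql; omega)]
  refine ⟨fun n => L.getD (idx n) v, ?_, ?_, ?_, ?_⟩
  · show L.getD (idx 0) v = v
    have h00 : idx 0 = 0 := by simp [hidx]
    rw [h00, List.getD_eq_getElem L v (by omega)]
    rw [List.getElem?_eq_getElem (by omega : 0 < L.length)] at h0
    exact Option.some.inj h0
  · intro n
    show E (L.getD (idx n) v) (L.getD (idx (n+1)) v)
    rw [List.getD_eq_getElem L v (hidxlt n), List.getD_eq_getElem L v (hidxlt (n+1))]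
    by_cases h1 : n + 1 ≤ pl
    · have e1 : idx n = n := by simp [hidx]; omega
      have e2 : idx (n+1) = n + 1 := by
        simp only [hidx]
        split
        · rfl
        · rw [show n + 1 - pl = 0 by omega]
          simp; omega
      have := chain'_getElem hc (show n + 1 < L.length by omega)
      convert this using 2 <;> omega
    · have e1 : idx n = pl + (n - pl) % ql := by simp [hidx]; omega
      have e2 : idx (n+1) = pl + ((n - pl) % ql + 1) % ql := by
        simp only [hidx, if_neg (by omega : ¬ n + 1 < pl)]
        rw [show n + 1 - pl = (n - pl) + 1 by omega]
        conv_rhs => rw [Nat.mod_add_mod]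
      set r := (n - pl) % ql with hr
      have hrlt : r < ql := Nat.mod_lt _ hql
      by_cases h2 : r + 1 < ql
      · have e2' : idx (n+1) = pl + (r+1) := by rw [e2, Nat.mod_eq_of_lt h2]
        have hch := chain'_getElem hc (show pl + r + 1 < L.length by omega)
        convert hch using 2 <;> omega
      · have hre : r + 1 = ql := by omega
        have e2' : idx (n+1) = pl := by rw [e2, hre]; simp
        have hper' : L[pl + ql]'(by omega) = L[pl]'(by omega) := by
          rw [List.getElem?_eq_getElem (show pl + ql < L.length by omega),
            List.getElem?_eq_getElem (show pl < L.length by omega)] at hper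
          exact Option.some.inj hper
        have hch := chain'_getElem hc (show pl + r + 1 < L.length by omega)
        have key : E (L[pl + r]'(by omega)) (L[pl + ql]'(by omega)) := by
          convert hch using 2
          omega
        rw [hper'] at key
        convert key using 2
  · intro n hn
    show L.getD (idx (n + ql)) v = L.getD (idx n) v
    have e1 : idx (n + ql) = idx n := by
      simp only [hidx, if_neg (by omega : ¬ n + ql < pl), if_neg (by omega : ¬ n < pl)]
      rw [show n + ql - pl = (n - pl) + ql by omega, Nat.add_mod_right]
    rw [e1]
  · intro j hj1 hj2 n
    refine ⟨j + (n+1) * ql, by nlinarith, ?_⟩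
    show L.getD (idx (j + (n+1) * ql)) v = L.getD j v
    have e1 : idx (j + (n+1) * ql) = j := by
      simp only [hidx, if_neg (by omega : ¬ j + (n+1) * ql < pl)]
      rw [show j + (n+1) * ql - pl = (j - pl) + (n+1) * ql by omega,
        Nat.add_mul_mod_self_right, Nat.mod_eq_of_lt (by omega)]
      omega
    rw [e1]

section Paths
variable [Fintype V] {E : V → V → Prop} {ρ : ℕ → V}

/-- occurs infinitely often -/
def InfOcc (ρ : ℕ → V) (u : V) : Prop := ∀ n, ∃ m, n ≤ m ∧ ρ m = u

lemma walk_reach (hρ : ∀ n, E (ρ n) (ρ (n+1))) (n : ℕ) {b : V} (hb : InfOcc ρ b) :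
    ∃ l, Walk E l (ρ n) b ∧ l.length ≤ Fintype.card V := by
  obtain ⟨m, hnm, hm⟩ := hb n
  have := walk_segment ρ hρ hnm
  rw [hm] at this
  exact walk_shorten this

lemma walk_one (hρ : ∀ n, E (ρ n) (ρ (n+1))) {a b : V} (ha : InfOcc ρ a) (hb : InfOcc ρ b) :
    ∃ l, Walk E l a b ∧ 2 ≤ l.length ∧ l.length ≤ Fintype.card V + 1 := by
  obtain ⟨n, -, hn⟩ := ha 0
  obtain ⟨l', ⟨hc, h0, hl⟩, hlen⟩ := walk_reach hρ (n+1) hb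
  have hpos : 0 < l'.length := by
    by_contra hl0
    rw [List.getElem?_eq_none (by omega)] at h0
    exact absurd h0 (by simp)
  refine ⟨a :: l', ⟨?_, ?_, ?_⟩, by simp; omega, by simp; omega⟩
  · apply List.isChain_cons.mpr
    refine ⟨?_, hc⟩
    intro y hy
    rw [List.head?_eq_getElem?, h0] at hy
    cases hy
    rw [← hn]
    exact hρ n
  · simp
  · rw [show (a :: l').length - 1 = (l'.length - 1) + 1 by simp; omega,
      List.getElem?_cons_succ]
    exact hl

lemma path_through (hρ : ∀ n, E (ρ n) (ρ (n+1))) :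
    ∀ ts : List V, (∀ t ∈ ts, InfOcc ρ t) → ∀ a b : V, InfOcc ρ a → InfOcc ρ b →
    ∃ l, Walk E l a b ∧ 2 ≤ l.length ∧
      l.length ≤ (ts.length + 1) * Fintype.card V + 1 ∧ ∀ t ∈ ts, t ∈ l := by
  intro ts
  induction ts with
  | nil =>
    intro _ a b ha hb
    obtain ⟨l, hw, h2, hle⟩ := walk_one hρ ha hb
    exact ⟨l, hw, h2, by simpa using hle, by simp⟩
  | cons t rest ih =>
    intro hts a b ha hb
    have hcard : 0 < Fintype.card V := Fintype.card_pos_iff.mpr ⟨a⟩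
    obtain ⟨n, -, hn⟩ := ha 0
    obtain ⟨l₁, hw₁, hlen₁⟩ := by
      have := walk_reach hρ n (hts t (by simp))
      rwa [hn] at this
    obtain ⟨l₂, hw₂, h2₂, hle₂, hmem₂⟩ :=
      ih (fun x hx => hts x (by simp [hx])) t b (hts t (by simp)) hb
    refine ⟨l₁.dropLast ++ l₂, walk_append hw₁ hw₂, ?_, ?_, ?_⟩
    · rw [List.length_append]; omega
    · rw [List.length_append, List.length_dropLast, List.length_cons]
      have h1pos := hw₁.pos
      calc l₁.length - 1 + l₂.length ≤ (Fintype.card V - 1) + ((rest.length + 1) * Fintype.card V + 1) := by omega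
        _ ≤ (rest.length + 1 + 1) * Fintype.card V + 1 := by ring_nf; omega
    · intro x hx
      rw [List.mem_append]
      right
      rcases List.mem_cons.mp hx with h | h
      · subst h
        obtain ⟨-, h20, -⟩ := hw₂
        exact List.mem_of_getElem? h20
      · exact hmem₂ x h

end Paths

/-- in a finite directed graph with a total edge relation, if some
infinite path from v satisfies every Büchi objective in β', then some lasso-shaped
path p·qᶱ from v (encoded as an eventually periodic path with preperiod |p| and
period |q|) of length |p| + |q| ≤ |V|·(|β'| + 1) satisfies every objective in β'. -/
theorem stmt19 {V : Type u} [Fintype V] (E : V → V → Prop) (hE : ∀ v, ∃ u, E v u)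
    (v : V) (β' : Finset (Set V))
    (h : ∃ ρ : ℕ → V, ρ 0 = v ∧ (∀ n, E (ρ n) (ρ (n + 1))) ∧
      ∀ α ∈ β', SatObj ObjKind.buchi ρ α) :
    ∃ (ρ : ℕ → V) (pl ql : ℕ), ρ 0 = v ∧ (∀ n, E (ρ n) (ρ (n + 1))) ∧ 0 < ql ∧
      (∀ n, pl ≤ n → ρ (n + ql) = ρ n) ∧
      pl + ql ≤ Fintype.card V * (β'.card + 1) ∧
      ∀ α ∈ β', SatObj ObjKind.buchi ρ α := by
  obtain ⟨ρ, hρ0, hρE, hsat⟩ := h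
  have hcard : 0 < Fintype.card V := Fintype.card_pos_iff.mpr ⟨v⟩
  by_cases hb : β' = ∅
  · -- empty case: simple pumping
    obtain ⟨i, j, hij, hjle, hρij⟩ : ∃ i j : ℕ, i < j ∧ j ≤ Fintype.card V ∧ ρ i = ρ j := by
      obtain ⟨x, y, hne, heq⟩ := Fintype.exists_ne_map_eq_of_card_lt
        (fun k : Fin (Fintype.card V + 1) => ρ k) (by simp)
      have hne' : (x : ℕ) ≠ (y : ℕ) := fun hc => hne (Fin.ext hc)
      rcases lt_or_gt_of_ne hne' with h' | h'
      · exact ⟨x, y, h', by omega, heq⟩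
      · exact ⟨y, x, h', by omega, heq.symm⟩
    have hw := walk_segment ρ hρE (show 0 ≤ j by omega)
    simp only [Nat.sub_zero, Nat.zero_add] at hw
    set L : List V := (List.range (j + 1)).map (fun k => ρ k) with hL
    have hLlen : L.length = j + 1 := by simp [hL]
    have hget : ∀ k, k ≤ j → L[k]? = some (ρ k) := by
      intro k hk
      simp [hL, List.getElem?_map, List.getElem?_range (by omega : k < j + 1)]
    obtain ⟨ρ', h1, h2, h3, _⟩ := lasso_of_list (L := L) (v := v) (pl := i) (ql := j - i)
      hw.1 (by omega) (by omega)
      (by rw [hget 0 (by omega), hρ0])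
      (by rw [show i + (j - i) = j by omega, hget j le_rfl, hget i (by omega), hρij])
    refine ⟨ρ', i, j - i, h1, h2, by omega, h3, by rw [hb]; simpa using by omega, ?_⟩
    rw [hb]
    simp
  · -- nonempty case
    have hwit : ∀ α : {α // α ∈ β'}, ∃ t, InfOcc ρ t ∧ t ∈ α.1 := by
      rintro ⟨α, hα⟩
      obtain ⟨t, ht1, ht2⟩ := hsat α hα
      exact ⟨t, ht1, ht2⟩
    choose u hu1 hu2 using hwit
    set ts : List V := β'.attach.toList.map u with hts_def
    have htslen : ts.length = β'.card := by simp [hts_def]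
    have htsinf : ∀ t ∈ ts, InfOcc ρ t := by
      intro t ht
      simp only [hts_def, List.mem_map] at ht
      obtain ⟨α, -, rfl⟩ := ht
      exact hu1 α
    have htsne : ts ≠ [] := by
      intro hc
      rw [hc] at htslen
      exact hb (Finset.card_eq_zero.mp htslen.symm)
    obtain ⟨t₀, rest, hts_eq⟩ := List.exists_cons_of_ne_nil htsne
    have ht₀ : InfOcc ρ t₀ := htsinf t₀ (by rw [hts_eq]; simp)
    obtain ⟨l₂, hw₂, h2₂, hle₂, hmem₂⟩ := path_through hρE rest
      (fun x hx => htsinf x (by rw [hts_eq]; simp [hx])) t₀ t₀ ht₀ ht₀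
    obtain ⟨l₀, hw₀, hlen₀⟩ := by
      have := walk_reach hρE 0 ht₀
      rwa [hρ0] at this
    have h0pos := hw₀.pos
    set L : List V := l₀.dropLast ++ l₂ with hLdef
    have hwL : Walk E L v t₀ := walk_append hw₀ hw₂
    set pl := l₀.length - 1 with hpl
    set ql := l₂.length - 1 with hql
    have hdll : l₀.dropLast.length = pl := by simp [hpl]
    have hLlen : L.length = pl + ql + 1 := by
      simp only [hLdef, List.length_append, hdll]
      omega
    have hgetr : ∀ k, k < l₂.length → L[pl + k]? = l₂[k]? := by
      intro k hk
      rw [hLdef, List.getElem?_append, if_neg (by rw [hdll]; omega), hdll,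
        show pl + k - pl = k by omega]
    obtain ⟨ρ', h1, h2, h3, h4⟩ := lasso_of_list (L := L) (v := v) (pl := pl) (ql := ql)
      hwL.1 hLlen (by omega)
      hwL.2.1
      (by
        have h00 := hgetr 0 (by omega)
        rw [Nat.add_zero] at h00
        rw [hgetr ql (by omega), h00]
        have hlst := hw₂.2.2
        rw [show l₂.length - 1 = ql from rfl] at hlst
        rw [hlst, hw₂.2.1])
    refine ⟨ρ', pl, ql, h1, h2, by omega, h3, ?_, ?_⟩
    · have : rest.length + 1 = β'.card := by
        rw [← htslen, hts_eq]; simp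
      have hle₂' : l₂.length ≤ β'.card * Fintype.card V + 1 := by
        calc l₂.length ≤ (rest.length + 1) * Fintype.card V + 1 := hle₂
          _ = β'.card * Fintype.card V + 1 := by rw [this]
      calc pl + ql ≤ (Fintype.card V - 1) + β'.card * Fintype.card V := by omega
        _ ≤ Fintype.card V * (β'.card + 1) := by ring_nf; omega
    · intro α hα
      have htmem : u ⟨α, hα⟩ ∈ ts := by
        rw [hts_def]
        exact List.mem_map_of_mem (f := u) (by simp)
      set t := u ⟨α, hα⟩ with htdef
      have htl₂ : t ∈ l₂ := by
        rw [hts_eq] at htmem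
        rcases List.mem_cons.mp htmem with h | h
        · subst h
          exact List.mem_of_getElem? hw₂.2.1
        · exact hmem₂ t h
      obtain ⟨k, hk, hkt⟩ := List.mem_iff_getElem.mp htl₂
      have hocc : ∃ j', pl ≤ j' ∧ j' < pl + ql ∧ L.getD j' v = t := by
        by_cases hkq : k < ql
        · refine ⟨pl + k, by omega, by omega, ?_⟩
          rw [List.getD_eq_getElem L v (by omega)]
          have := hgetr k (by omega)
          rw [List.getElem?_eq_getElem (show pl + k < L.length by omega),
            List.getElem?_eq_getElem (show k < l₂.length by omega)] at this
          rw [Option.some.inj this]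
          exact hkt
        · -- k = ql, so t = last of l₂ = t₀ = l₂[0]
          have hkeq : k = ql := by omega
          have hlast : l₂[l₂.length - 1]'(by omega) = t₀ := by
            have := hw₂.2.2
            rw [List.getElem?_eq_getElem (by omega)] at this
            exact Option.some.inj this
          have hhead : l₂[0]'(by omega) = t₀ := by
            have := hw₂.2.1
            rw [List.getElem?_eq_getElem (by omega)] at this
            exact Option.some.inj this
          have htt₀ : t = t₀ := by
            rw [← hkt, ← hlast]
            congr 1
          refine ⟨pl, le_rfl, by omega, ?_⟩
          rw [List.getD_eq_getElem L v (by omega)]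
          have := hgetr 0 (by omega)
          rw [List.getElem?_eq_getElem (show pl + 0 < L.length by omega),
            List.getElem?_eq_getElem (show 0 < l₂.length by omega)] at this
          have h' : L[pl]'(by omega) = l₂[0]'(by omega) := by
            convert Option.some.inj this using 2 <;> omega
          rw [h', hhead, htt₀]
      obtain ⟨j', hj1, hj2, hj3⟩ := hocc
      refine ⟨t, ?_, hu2 ⟨α, hα⟩⟩
      intro n
      obtain ⟨m, hm1, hm2⟩ := h4 j' hj1 hj2 n
      exact ⟨m, hm1, by rw [hm2, hj3]⟩
end
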